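/- arXiv:2310.07884 — 10 statements merged into one kernel-verified Lean document; each statement's English description precedes it below -/
import Mathlib

section
/- For n ∈ ℕ define the distribution p*^{(n)} by p*_i = (1/H_n)/(i+1) for i = 1,...,n−1, p*_n = 1/H_n, and p*_i = 0 for i ≥ n+1. Then for every strategy q, A(p*^{(n)}, q) = (1/H_n)·(1 − ∏_{l=1}^n (1 − q_l/l)); in particular A(p*^{(n)}, q) ≤ 1/H_n for all q, with equality attained by the strategy q^{(1)} (i.e. q_i = 1 for all i). -/
/-!
For `1 ≤ i ≤ n` the tail weight of `p*^{(n)}` is `λ_i = (1/H_n)/i`, since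
`1/(l(l+1)) = 1/l - 1/(l+1)` telescopes. With `λ_i = c/i` each term of `A` becomes
`U_{i-1} q_i c/i = c (U_{i-1} - U_i)`, so `A` telescopes to `c (1 - U_n)`.
-/

open scoped BigOperators

/-- `lam p i = Σ_{l=i}^∞ p_l / l`. -/
noncomputable def lam (p : ℕ → ℝ) (i : ℕ) : ℝ := ∑' l : ℕ, if i ≤ l then p l / (l : ℝ) else 0

/-- `U q i = ∏_{l=1}^i (1 - q_l / l)`, with `U q 0 = 1`. -/
noncomputable def U (q : ℕ → ℝ) (i : ℕ) : ℝ := ∏ l ∈ Finset.Icc 1 i, (1 - q l / (l : ℝ))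

/-- `A p q = Σ_{i=1}^∞ U_{i-1}(q) q_i λ_i(p)`. -/
noncomputable def A (p q : ℕ → ℝ) : ℝ := ∑' i : ℕ, U q i * q (i + 1) * lam p (i + 1)

/-- The single-threshold strategy `q^{(l)}`. -/
def thresh (l : ℕ) : ℕ → ℝ := fun i => if l ≤ i then 1 else 0

/-- The `n`-th harmonic number. -/
noncomputable def H (n : ℕ) : ℝ := ∑ i ∈ Finset.Icc 1 n, (1 : ℝ) / i

/-- The distribution `p*^{(n)}`. -/
noncomputable def pstar (n : ℕ) : ℕ → ℝ := fun i =>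
  if 1 ≤ i ∧ i ≤ n - 1 then (1 / H n) / ((i : ℝ) + 1)
  else if i = n then 1 / H n else 0

open Finset

lemma U_zero (q : ℕ → ℝ) : U q 0 = 1 := by
  simp [U]

lemma U_succ (q : ℕ → ℝ) (i : ℕ) : U q (i + 1) = U q i * (1 - q (i + 1) / ((i : ℝ) + 1)) := by
  rw [U, prod_Icc_succ_top (by omega), ← U]
  push_cast
  ring

lemma U_nonneg {q : ℕ → ℝ} (hq : ∀ i, 1 ≤ i → q i ≤ 1) (n : ℕ) : 0 ≤ U q n := by
  refine prod_nonneg fun l hl => ?_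
  obtain ⟨hl1, -⟩ := mem_Icc.mp hl
  have hl1' : (1 : ℝ) ≤ l := by exact_mod_cast hl1
  have : q l / l ≤ 1 := (div_le_one (by linarith)).mpr (by linarith [hq l hl1])
  linarith

lemma U_thresh_one {n : ℕ} (hn : 1 ≤ n) : U (thresh 1) n = 0 :=
  prod_eq_zero (i := 1) (mem_Icc.mpr ⟨le_rfl, hn⟩) (by simp [thresh])

lemma H_pos {n : ℕ} (hn : 1 ≤ n) : 0 < H n :=
  sum_pos (fun i hi => by have := (mem_Icc.mp hi).1; positivity) ⟨1, mem_Icc.mpr ⟨le_rfl, hn⟩⟩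

lemma A_eq_of_lam {p q : ℕ → ℝ} {n : ℕ} {c : ℝ}
    (hlam : ∀ i, 1 ≤ i → i ≤ n → lam p i = c / i) (hlam_zero : ∀ i, n < i → lam p i = 0) :
    A p q = c * (1 - U q n) := by
  have hterm : ∀ i ∈ range n, U q i * q (i + 1) * lam p (i + 1) = c * (U q i - U q (i + 1)) := by
    intro i hi
    rw [hlam (i + 1) (by omega) (mem_range.mp hi), U_succ]
    push_cast
    field_simp
    ring
  rw [A, tsum_eq_sum (s := range n) fun i hi => by
      rw [hlam_zero (i + 1) (by simpa using hi), mul_zero],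
    sum_congr rfl hterm, ← mul_sum, sum_range_sub', U_zero]

lemma lam_eq_sum_of_eq_zero {p : ℕ → ℝ} {n : ℕ} (hp : ∀ l, n < l → p l = 0) (i : ℕ) :
    lam p i = ∑ l ∈ Ico i (n + 1), p l / l := by
  rw [lam, tsum_eq_sum (s := Ico i (n + 1)) fun l hl => ?_]
  · exact sum_congr rfl fun l hl => if_pos (mem_Ico.mp hl).1
  · simp only [mem_Ico, not_and, not_lt] at hl
    split_ifs with h
    · rw [hp l (hl h), zero_div]
    · rfl

lemma pstar_eq_zero {n l : ℕ} (hl : n < l) : pstar n l = 0 := by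
  simp only [pstar]
  rw [if_neg (by omega), if_neg (by omega)]

lemma lam_pstar {n i : ℕ} (hi : 1 ≤ i) (hin : i ≤ n) : lam (pstar n) i = 1 / H n / i := by
  rw [lam_eq_sum_of_eq_zero (fun _ => pstar_eq_zero)]
  induction hin using Nat.decreasingInduction with
  | self => simp [pstar, show ¬ n ≤ n - 1 by omega]
  | of_succ i hin ih =>
    have hi0 : (i : ℝ) ≠ 0 := by positivity
    rw [sum_eq_sum_Ico_succ_bot (by omega), ih (by omega), pstar, if_pos ⟨hi, by omega⟩]
    push_cast
    field_simp
    ring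

lemma lam_pstar_eq_zero {n i : ℕ} (hi : n < i) : lam (pstar n) i = 0 := by
  rw [lam_eq_sum_of_eq_zero (fun _ => pstar_eq_zero), Ico_eq_empty (by omega), sum_empty]

lemma A_pstar (n : ℕ) (q : ℕ → ℝ) : A (pstar n) q = 1 / H n * (1 - U q n) :=
  A_eq_of_lam (fun _ hi hin => lam_pstar hi hin) (fun _ => lam_pstar_eq_zero)

theorem stmt1 (n : ℕ) (hn : 1 ≤ n) :
    (∀ q : ℕ → ℝ, (∀ i, 1 ≤ i → q i ∈ Set.Icc (0 : ℝ) 1) →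
      A (pstar n) q = (1 / H n) * (1 - ∏ l ∈ Finset.Icc 1 n, (1 - q l / (l : ℝ))) ∧
      A (pstar n) q ≤ 1 / H n) ∧
    A (pstar n) (thresh 1) = 1 / H n := by
  have hc : 0 < 1 / H n := one_div_pos.mpr (H_pos hn)
  refine ⟨fun q hq => ⟨A_pstar n q, ?_⟩, ?_⟩
  · rw [A_pstar]
    nlinarith [U_nonneg (fun i hi => (hq i hi).2) n]
  · rw [A_pstar, U_thresh_one hn, sub_zero, mul_one]
end

section
/- Fix an integer n̄ ≥ 2 and define the probability vector x^{(n̄)} on {1,...,n̄} by x^{(n̄)}_1 = 1/(1+H_{n̄−1}) and x^{(n̄)}_i = (1/(1+H_{n̄−1}))/(i−1) for i = 2,...,n̄. Then for every distribution p supported on {1,...,n̄} (i.e. p_i = 0 for i > n̄), Σ_{l=1}^{n̄} x^{(n̄)}_l · A(p, q^{(l)}) = 1/(1+H_{n̄−1}). -/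
open scoped BigOperators

/-- The randomization distribution `x^{(n)}` over thresholds. -/
noncomputable def xdist (n : ℕ) : ℕ → ℝ := fun i =>
  if i = 1 then 1 / (1 + H (n - 1))
  else if 2 ≤ i ∧ i ≤ n then (1 / (1 + H (n - 1))) / ((i : ℝ) - 1)
  else 0

/-!
Against `q^{(l)}` nobody stops in the first `l - 1` rounds, and afterwards
`U_i(q^{(l)}) = (l - 1) / i`. With `c = 1 / (1 + H_{n-1})` and `x_l = c / (l - 1)`, each of
the `i` thresholds `2 ≤ l ≤ i + 1` contributes exactly `c / i` to the coefficient
`∑_l x_l U_i(q^{(l)}) q^{(l)}_{i+1}` of `λ_{i+1}(p)` (for `i = 0` the threshold `l = 1` alone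
contributes `c`), so this coefficient is `c` for every `i < n`. Finally
`∑_{i=1}^n λ_i(p) = ∑_m p_m = 1`, since `p_m / m` occurs in exactly `m` of the `λ_i`.
-/

open Finset

lemma U_thresh {l : ℕ} (hl : 1 ≤ l) (i : ℕ) :
    U (thresh l) i = if i < l then 1 else ((l : ℝ) - 1) / i := by
  induction i with
  | zero => simp [U, show l ≠ 0 by omega]
  | succ i ih =>
    rw [U, prod_Icc_succ_top (by omega), ← U, ih]
    rcases lt_trichotomy (i + 1) l with h | h | h
    · simp [thresh, h, show i < l by omega, show ¬ l ≤ i + 1 by omega]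
    · subst h
      have : (i : ℝ) + 1 ≠ 0 := by positivity
      simp only [thresh, if_pos (show i < i + 1 by omega), lt_irrefl, if_false, le_refl, if_true]
      push_cast
      field_simp
    · have hi : (i : ℝ) ≠ 0 := by norm_cast; omega
      simp only [thresh, if_neg (show ¬ i < l by omega), if_neg (show ¬ i + 1 < l by omega),
        if_pos (show l ≤ i + 1 by omega)]
      push_cast
      field_simp
      ring

lemma lam_eq_sum_Icc {n : ℕ} {p : ℕ → ℝ} (hsupp : ∀ i, n < i → p i = 0) (i : ℕ) :
    lam p i = ∑ m ∈ Icc i n, p m / m := by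
  rw [lam, tsum_eq_sum (s := Icc i n)]
  · exact sum_congr rfl fun m hm => if_pos (mem_Icc.1 hm).1
  · intro m hm
    split_ifs
    · rw [hsupp m (by simp_all), zero_div]
    · rfl

lemma A_eq_sum_range {n : ℕ} {p : ℕ → ℝ} (hsupp : ∀ i, n < i → p i = 0) (q : ℕ → ℝ) :
    A p q = ∑ i ∈ range n, U q i * q (i + 1) * lam p (i + 1) := by
  rw [A, tsum_eq_sum (s := range n)]
  intro i hi
  rw [lam_eq_sum_Icc hsupp, Icc_eq_empty (by simp_all), sum_empty, mul_zero]

lemma sum_range_lam {n : ℕ} {p : ℕ → ℝ} (hsupp : ∀ i, n < i → p i = 0) :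
    ∑ i ∈ range n, lam p (i + 1) = ∑ m ∈ Icc 1 n, p m := by
  simp_rw [lam_eq_sum_Icc hsupp]
  rw [sum_comm' (t' := Icc 1 n) (s' := range) (by intro i m; simp only [mem_range, mem_Icc]; omega)]
  refine sum_congr rfl fun m hm => ?_
  have hm : (m : ℝ) ≠ 0 := by norm_cast; simp at hm; omega
  rw [sum_const, card_range, nsmul_eq_mul]
  field_simp

lemma sum_Icc_eq_one_of_hasSum {n : ℕ} {p : ℕ → ℝ} (hps : HasSum (fun i : ℕ => p (i + 1)) 1)
    (hsupp : ∀ i, n < i → p i = 0) :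
    ∑ m ∈ Icc 1 n, p m = 1 := by
  have hfin : HasSum (fun i : ℕ => p (i + 1)) (∑ i ∈ range n, p (i + 1)) :=
    hasSum_sum_of_ne_finset_zero fun i hi => hsupp (i + 1) (by simp_all)
  rw [← hfin.unique hps, range_eq_Ico, sum_Ico_add' p, zero_add, Ico_add_one_right_eq_Icc]

lemma xdist_mul_U_thresh_mul_thresh_of_le {n i l : ℕ} (h2l : 2 ≤ l) (hli : l ≤ i + 1)
    (hin : i < n) :
    xdist n l * (U (thresh l) i * thresh l (i + 1)) = 1 / (1 + H (n - 1)) / i := by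
  have hl : (l : ℝ) - 1 ≠ 0 := by
    have : (2 : ℝ) ≤ l := by exact_mod_cast h2l
    linarith
  rcases hli.lt_or_eq with h | rfl
  · simp only [xdist, U_thresh (by omega : 1 ≤ l), thresh, if_neg (show l ≠ 1 by omega),
      if_pos (show 2 ≤ l ∧ l ≤ n by omega), if_neg (show ¬ i < l by omega),
      if_pos (show l ≤ i + 1 by omega)]
    field_simp
  · simp only [xdist, U_thresh (by omega : 1 ≤ i + 1), thresh, if_neg (show i + 1 ≠ 1 by omega),
      if_pos (show 2 ≤ i + 1 ∧ i + 1 ≤ n by omega), if_pos (show i < i + 1 by omega), le_refl]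
    push_cast
    simp

lemma sum_xdist_mul_U_thresh_mul_thresh {n i : ℕ} (hin : i < n) :
    ∑ l ∈ Icc 1 n, xdist n l * (U (thresh l) i * thresh l (i + 1)) = 1 / (1 + H (n - 1)) := by
  set c := 1 / (1 + H (n - 1))
  have h_first : xdist n 1 * (U (thresh 1) i * thresh 1 (i + 1)) = if i = 0 then c else 0 := by
    rcases Nat.eq_zero_or_pos i with rfl | hi
    · simp [xdist, U, thresh, c]
    · simp [xdist, U_thresh le_rfl, thresh, hi.ne', c]
  have h_rest : ∑ l ∈ Icc 2 n, xdist n l * (U (thresh l) i * thresh l (i + 1)) = i * (c / i) := by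
    rw [← sum_filter_add_sum_filter_not (Icc 2 n) (· ≤ i + 1)]
    have hfilter : (Icc 2 n).filter (· ≤ i + 1) = Icc 2 (i + 1) := by
      ext l; simp only [mem_filter, mem_Icc]; omega
    have h_late : ∀ l ∈ (Icc 2 n).filter (¬ · ≤ i + 1),
        xdist n l * (U (thresh l) i * thresh l (i + 1)) = 0 := fun l hl => by
      simp [thresh, show ¬ l ≤ i + 1 by simp_all]
    rw [hfilter, sum_congr rfl fun l hl =>
        xdist_mul_U_thresh_mul_thresh_of_le (mem_Icc.1 hl).1 (mem_Icc.1 hl).2 hin,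
      sum_eq_zero h_late, add_zero, sum_const, Nat.card_Icc, show i + 1 + 1 - 2 = i by omega,
      nsmul_eq_mul]
  rw [← insert_Icc_add_one_left_eq_Icc (by omega : 1 ≤ n), sum_insert (by simp), h_first,
    show (1 : ℕ) + 1 = 2 from rfl, h_rest]
  rcases Nat.eq_zero_or_pos i with rfl | hi
  · simp
  · have : (i : ℝ) ≠ 0 := by positivity
    rw [if_neg hi.ne', zero_add]
    field_simp

theorem stmt2_general (n : ℕ) (p : ℕ → ℝ)
    (hps : HasSum (fun i : ℕ => p (i + 1)) 1)
    (hsupp : ∀ i, n < i → p i = 0) :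
    ∑ l ∈ Finset.Icc 1 n, xdist n l * A p (thresh l) = 1 / (1 + H (n - 1)) := by
  calc ∑ l ∈ Icc 1 n, xdist n l * A p (thresh l)
      = ∑ i ∈ range n,
          (∑ l ∈ Icc 1 n, xdist n l * (U (thresh l) i * thresh l (i + 1))) * lam p (i + 1) := by
        simp_rw [A_eq_sum_range hsupp, mul_sum, sum_mul]
        rw [sum_comm]
        simp_rw [mul_assoc]
    _ = 1 / (1 + H (n - 1)) * ∑ i ∈ range n, lam p (i + 1) := by
        rw [mul_sum]
        exact sum_congr rfl fun i hi => by rw [sum_xdist_mul_U_thresh_mul_thresh (mem_range.1 hi)]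
    _ = 1 / (1 + H (n - 1)) := by
        rw [sum_range_lam hsupp, sum_Icc_eq_one_of_hasSum hps hsupp, mul_one]

theorem stmt2 (n : ℕ) (hn : 2 ≤ n) (p : ℕ → ℝ)
    (hp : ∀ i, 1 ≤ i → 0 ≤ p i) (hps : HasSum (fun i : ℕ => p (i + 1)) 1)
    (hsupp : ∀ i, n < i → p i = 0) :
    ∑ l ∈ Finset.Icc 1 n, xdist n l * A p (thresh l) = 1 / (1 + H (n - 1)) :=
  stmt2_general n p hps hsupp
end

section
/- For every distribution p, every strategy q, and every ρ > 1, the blocked distribution p̃ = Block(p,ρ) satisfies |A(p,q) − A(p̃,q)| ≤ ρ − 1. -/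
open scoped BigOperators

/-- The index set `I(ρ) = {⌈ρ^l⌉ : l = 0, 1, 2, ...}`. -/
def Iset (ρ : ℝ) : Set ℕ := {m | ∃ l : ℕ, m = ⌈ρ ^ l⌉₊}

/-- `Ienum ρ l = I(ρ, l)`: the `l`-th distinct element of `I(ρ)` (for `l ≥ 1`,
listed in increasing order), with the convention `I(ρ, 0) = 0`. -/
noncomputable def Ienum (ρ : ℝ) : ℕ → ℕ
  | 0 => 0
  | l + 1 => Nat.nth (· ∈ Iset ρ) l

/-- The blocked distribution `Block(p, ρ)`: it is supported on `I(ρ)`, and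
`Block(p,ρ)_{I(ρ,l)} = Σ_{j=I(ρ,l-1)+1}^{I(ρ,l)} p_j`. -/
noncomputable def Block (p : ℕ → ℝ) (ρ : ℝ) (i : ℕ) : ℝ :=
  ∑' l : ℕ, if i = Ienum ρ (l + 1) then ∑ j ∈ Finset.Icc (Ienum ρ l + 1) i, p j else 0

/-!
Exchanging the two sums in `A` gives `A p q = ∑ₗ p_l F(l)`, where
`F(n) = avgUq q n = (1/n) ∑_{i ≤ n} U_{i-1}(q) q_i` is an average of `n` numbers in `[0, 1]`.
Blocking moves the mass `p_j` to the right end `M(j) = blockEnd ρ j` of the block containing `j`,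
so `A (Block p ρ) q = ∑_j p_j F(M(j))`, and `j ≤ M(j) ≤ ρ j` by the geometric growth of `I(ρ)`.
Appending `m - n` numbers in `[0, 1]` to an average of `n` of them moves it by at most
`(m - n)/n`, hence `|F(j) - F(M(j))| ≤ ρ - 1`, and averaging against `p` gives the bound.
-/

open Finset

lemma abs_div_sub_div_le {a b n m : ℝ} (hn : 0 < n) (hnm : n ≤ m) (ha : 0 ≤ a) (han : a ≤ n)
    (hab : a ≤ b) (hba : b - a ≤ m - n) : |a / n - b / m| ≤ (m - n) / n := by
  have hm : 0 < m := hn.trans_le hnm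
  have hmn : 0 ≤ m - n := sub_nonneg.2 hnm
  rw [abs_sub_le_iff, div_sub_div _ _ hn.ne' hm.ne', div_sub_div _ _ hm.ne' hn.ne',
    div_le_div_iff₀ (by positivity) hn, div_le_div_iff₀ (by positivity) hn]
  constructor
  · nlinarith [mul_nonneg (mul_nonneg hn.le hmn) (by linarith : (0 : ℝ) ≤ m - a),
      mul_nonneg (mul_nonneg hn.le hn.le) (sub_nonneg.2 hab)]
  · nlinarith [mul_nonneg hn.le (mul_nonneg hmn hmn), mul_nonneg hn.le (mul_nonneg ha hmn),
      mul_nonneg (mul_nonneg hn.le hn.le) (by linarith : (0 : ℝ) ≤ a + (m - n) - b)]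

lemma abs_tsum_mul_sub_tsum_mul_le {ι : Type*} {w x y : ι → ℝ} {c : ℝ} (hw : ∀ j, 0 ≤ w j)
    (hws : HasSum w 1) (hx : Summable fun j => w j * x j) (hy : Summable fun j => w j * y j)
    (hxy : ∀ j, |x j - y j| ≤ c) : |∑' j, w j * x j - ∑' j, w j * y j| ≤ c := by
  have hwc : HasSum (fun j => w j * c) c := by simpa using hws.mul_right c
  have hbound : ∀ j, |w j * x j - w j * y j| ≤ w j * c := fun j => by
    rw [← mul_sub, abs_mul, abs_of_nonneg (hw j)]
    exact mul_le_mul_of_nonneg_left (hxy j) (hw j)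
  rw [← hx.tsum_sub hy, abs_le]
  exact ⟨hasSum_le (fun j => (abs_le.1 (hbound j)).1) hwc.neg (hx.sub hy).hasSum,
    hasSum_le (fun j => (abs_le.1 (hbound j)).2) (hx.sub hy).hasSum hwc⟩

lemma hasSum_sum_Icc_of_strictMono {e : ℕ → ℕ} (he : StrictMono e) (he0 : e 0 = 0)
    {f : ℕ → ℝ} (hf : ∀ j, 1 ≤ j → 0 ≤ f j) {a : ℝ} (hs : HasSum (fun j => f (j + 1)) a) :
    HasSum (fun k => ∑ j ∈ Icc (e k + 1) (e (k + 1)), f j) a := by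
  have hblock : ∀ k,
      ∑ j ∈ Icc (e k + 1) (e (k + 1)), f j = ∑ j ∈ Ico (e k) (e (k + 1)), f (j + 1) :=
    fun k => by rw [sum_Ico_add', Ico_add_one_right_eq_Icc]
  have hpartial : ∀ K, ∑ k ∈ range K, ∑ j ∈ Icc (e k + 1) (e (k + 1)), f j =
      ∑ j ∈ range (e K), f (j + 1) := by
    intro K
    induction K with
    | zero => simp [he0]
    | succ K ih =>
      rw [sum_range_succ, ih, hblock, range_eq_Ico, range_eq_Ico,
        sum_Ico_consecutive _ (Nat.zero_le _) (he.monotone K.le_succ)]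
  rw [hasSum_iff_tendsto_nat_of_nonneg fun k => sum_nonneg fun j hj => hf j (by simp at hj; omega)]
  simp only [hpartial]
  exact hs.tendsto_sum_nat.comp he.tendsto_atTop

section Strategy

variable {q : ℕ → ℝ}

noncomputable def sumUq (q : ℕ → ℝ) (n : ℕ) : ℝ := ∑ i ∈ range n, U q i * q (i + 1)

noncomputable def avgUq (q : ℕ → ℝ) (n : ℕ) : ℝ := sumUq q n / n

lemma avgUq_zero : avgUq q 0 = 0 := by simp [avgUq]

variable (hq : ∀ i, 1 ≤ i → q i ∈ Set.Icc (0 : ℝ) 1)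
include hq

lemma U_mem_Icc (i : ℕ) : U q i ∈ Set.Icc (0 : ℝ) 1 := by
  have factor : ∀ l ∈ Icc 1 i, 1 - q l / l ∈ Set.Icc (0 : ℝ) 1 := by
    intro l hl
    have hl1 : (1 : ℝ) ≤ l := by exact_mod_cast (mem_Icc.1 hl).1
    obtain ⟨hq0, hq1⟩ := hq l (mem_Icc.1 hl).1
    have : q l / l ≤ 1 := (div_le_one (by linarith)).2 (by linarith)
    exact ⟨by linarith, by linarith [div_nonneg hq0 (by linarith : (0 : ℝ) ≤ l)]⟩
  exact ⟨prod_nonneg fun l hl => (factor l hl).1,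
    prod_le_one (fun l hl => (factor l hl).1) fun l hl => (factor l hl).2⟩

lemma U_mul_mem_Icc (i : ℕ) : U q i * q (i + 1) ∈ Set.Icc (0 : ℝ) 1 := by
  obtain ⟨hU0, hU1⟩ := U_mem_Icc hq i
  obtain ⟨hq0, hq1⟩ := hq (i + 1) (Nat.le_add_left 1 i)
  exact ⟨mul_nonneg hU0 hq0, mul_le_one₀ hU1 hq0 hq1⟩

lemma sumUq_sub_mem_Icc {n m : ℕ} (hnm : n ≤ m) :
    sumUq q m - sumUq q n ∈ Set.Icc (0 : ℝ) (m - n) := by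
  rw [sumUq, sumUq, ← sum_Ico_eq_sub _ hnm]
  refine ⟨sum_nonneg fun i _ => (U_mul_mem_Icc hq i).1, ?_⟩
  calc ∑ i ∈ Ico n m, U q i * q (i + 1) ≤ #(Ico n m) • (1 : ℝ) :=
        sum_le_card_nsmul _ _ _ fun i _ => (U_mul_mem_Icc hq i).2
    _ = m - n := by rw [Nat.card_Ico, nsmul_one, Nat.cast_sub hnm]

lemma sumUq_mem_Icc (n : ℕ) : sumUq q n ∈ Set.Icc (0 : ℝ) n := by
  simpa [sumUq] using sumUq_sub_mem_Icc hq (Nat.zero_le n)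

lemma avgUq_mem_Icc (n : ℕ) : avgUq q n ∈ Set.Icc (0 : ℝ) 1 := by
  obtain ⟨h0, hn⟩ := sumUq_mem_Icc hq n
  exact ⟨div_nonneg h0 n.cast_nonneg, div_le_one_of_le₀ hn n.cast_nonneg⟩

lemma abs_avgUq_sub_avgUq_le {n m : ℕ} (hn : 0 < n) (hnm : n ≤ m) :
    |avgUq q n - avgUq q m| ≤ (m - n) / n := by
  obtain ⟨hd0, hd⟩ := sumUq_sub_mem_Icc hq hnm
  exact abs_div_sub_div_le (by exact_mod_cast hn) (by exact_mod_cast hnm)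
    (sumUq_mem_Icc hq n).1 (sumUq_mem_Icc hq n).2 (sub_nonneg.1 hd0) hd

lemma summable_mul_avgUq_comp {ι : Type*} {r : ι → ℝ} (hr : Summable r) (φ : ι → ℕ) :
    Summable fun x => r x * avgUq q (φ x) := by
  refine hr.abs.of_norm_bounded fun x => ?_
  obtain ⟨h0, h1⟩ := avgUq_mem_Icc hq (φ x)
  rw [Real.norm_eq_abs, abs_mul, abs_of_nonneg h0]
  exact mul_le_of_le_one_right (abs_nonneg _) h1

lemma A_eq_tsum {r : ℕ → ℝ} (hr : ∀ l, 1 ≤ l → 0 ≤ r l) (hrs : Summable r) :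
    A r q = ∑' l, r l * avgUq q l := by
  set g : ℕ × ℕ → ℝ := fun x => if x.2 < x.1 then U q x.2 * q (x.2 + 1) * (r x.1 / x.1) else 0
  have hg : 0 ≤ g := fun x => by
    dsimp only [g]
    split_ifs with h
    · exact mul_nonneg (U_mul_mem_Icc hq _).1 (div_nonneg (hr _ h.pos) x.1.cast_nonneg)
    · exact le_rfl
  have hg_row : ∀ l, ∑' i, g (l, i) = r l * avgUq q l := fun l => by
    rw [tsum_eq_sum (s := range l) fun i hi => if_neg (by simpa using hi)]
    dsimp only [g]
    rw [sum_congr rfl fun i hi => if_pos (mem_range.1 hi), ← sum_mul, avgUq, sumUq]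
    ring
  have hg_col : ∀ i, ∑' l, g (l, i) = U q i * q (i + 1) * lam r (i + 1) := fun i => by
    rw [lam, ← tsum_mul_left]
    exact tsum_congr fun l => by simp only [g, mul_ite, mul_zero, Nat.lt_iff_add_one_le]
  have hg_row_summable : Summable fun l => ∑' i, g (l, i) := by
    simpa only [hg_row] using summable_mul_avgUq_comp hq hrs fun l => l
  have hg_summable : Summable (Function.uncurry fun l i => g (l, i)) :=
    (summable_prod_of_nonneg hg).2 ⟨fun l => summable_of_ne_finset_zero (s := range l)
      fun i hi => if_neg (by simpa using hi), hg_row_summable⟩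
  calc A r q = ∑' i, ∑' l, g (l, i) := by simp only [A, hg_col]
    _ = ∑' l, ∑' i, g (l, i) := hg_summable.tsum_comm
    _ = ∑' l, r l * avgUq q l := tsum_congr hg_row

end Strategy

section Blocks

variable {ρ : ℝ}

lemma Block_eq_zero (p : ℕ → ℝ) {i : ℕ} (hi : i ∉ Set.range fun k => Ienum ρ (k + 1)) :
    Block p ρ i = 0 := by
  rw [Block, tsum_congr fun l => if_neg fun h => hi ⟨l, h.symm⟩, tsum_zero]

lemma Block_nonneg {p : ℕ → ℝ} (hp : ∀ j, 1 ≤ j → 0 ≤ p j) (i : ℕ) : 0 ≤ Block p ρ i :=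
  tsum_nonneg fun l => by
    split_ifs
    · exact sum_nonneg fun j hj => hp j (by simp at hj; omega)
    · exact le_rfl

/-- For `j ≥ 1`, the right end `I(ρ, k)` of the block `(I(ρ, k - 1), I(ρ, k)]` containing `j`. -/
noncomputable def blockEnd (ρ : ℝ) (j : ℕ) : ℕ := Ienum ρ (sInf {k | j ≤ Ienum ρ k})

variable (hρ : 1 < ρ)
include hρ

lemma exists_le_ceil_pow (j : ℕ) : ∃ a : ℕ, j ≤ ⌈ρ ^ a⌉₊ := by
  obtain ⟨a, ha⟩ := pow_unbounded_of_one_lt (j : ℝ) hρ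
  exact ⟨a, (Nat.lt_ceil.2 ha).le⟩

lemma Iset_infinite : (Iset ρ).Infinite :=
  Set.infinite_of_forall_exists_gt fun j => by
    obtain ⟨a, ha⟩ := exists_le_ceil_pow hρ (j + 1)
    exact ⟨_, ⟨a, rfl⟩, ha⟩

lemma Ienum_strictMono : StrictMono (Ienum ρ) := by
  refine strictMono_nat_of_lt_succ fun k => ?_
  cases k with
  | zero =>
    obtain ⟨a, ha⟩ : Nat.nth (· ∈ Iset ρ) 0 ∈ Iset ρ :=
      Nat.nth_mem_of_infinite (Iset_infinite hρ) 0
    show 0 < Nat.nth (· ∈ Iset ρ) 0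
    rw [ha]
    exact Nat.ceil_pos.2 (pow_pos (by linarith) a)
  | succ k => exact Nat.nth_strictMono (Iset_infinite hρ) k.lt_succ_self

lemma Ienum_succ_injective : Function.Injective fun k => Ienum ρ (k + 1) :=
  (Ienum_strictMono hρ).injective.comp Nat.succ_injective

lemma Block_Ienum_succ (p : ℕ → ℝ) (k : ℕ) :
    Block p ρ (Ienum ρ (k + 1)) = ∑ j ∈ Icc (Ienum ρ k + 1) (Ienum ρ (k + 1)), p j := by
  rw [Block, tsum_eq_single k fun l hl => if_neg fun h => hl (Ienum_succ_injective hρ h.symm),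
    if_pos rfl]

lemma le_blockEnd (j : ℕ) : j ≤ blockEnd ρ j :=
  Nat.sInf_mem (s := {k | j ≤ Ienum ρ k}) ⟨j, (Ienum_strictMono hρ).id_le j⟩

lemma blockEnd_eq {j k : ℕ} (hkj : Ienum ρ k < j) (hjk : j ≤ Ienum ρ (k + 1)) :
    blockEnd ρ j = Ienum ρ (k + 1) := by
  suffices sInf {k | j ≤ Ienum ρ k} = k + 1 by rw [blockEnd, this]
  refine le_antisymm (Nat.sInf_le hjk) (Nat.succ_le_of_lt ?_)
  by_contra! h
  have := (Ienum_strictMono hρ).monotone h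
  have := le_blockEnd hρ j
  rw [blockEnd] at this
  omega

lemma blockEnd_le_of_mem {j m : ℕ} (hm : m ∈ Iset ρ) (hjm : j ≤ m) : blockEnd ρ j ≤ m := by
  classical
  have hm_eq : Ienum ρ (Nat.count (· ∈ Iset ρ) m + 1) = m := Nat.nth_count hm
  rw [← hm_eq] at hjm ⊢
  exact (Ienum_strictMono hρ).monotone (Nat.sInf_le hjm)

lemma blockEnd_le_mul {j : ℕ} (hj : 1 ≤ j) : (blockEnd ρ j : ℝ) ≤ ρ * j := by
  classical
  have hj' : (1 : ℝ) ≤ j := by exact_mod_cast hj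
  have hex := exists_le_ceil_pow hρ j
  have hle : (blockEnd ρ j : ℝ) ≤ ⌈ρ ^ Nat.find hex⌉₊ := by
    exact_mod_cast blockEnd_le_of_mem hρ ⟨_, rfl⟩ (Nat.find_spec hex)
  rcases h : Nat.find hex with _ | b
  · rw [h, pow_zero, Nat.ceil_one, Nat.cast_one] at hle
    nlinarith
  · -- minimality of the exponent: `⌈ρ ^ b⌉₊ < j`, so `ρ ^ (b + 1) ≤ ρ * (j - 1)`
    have hb : (⌈ρ ^ b⌉₊ : ℝ) + 1 ≤ j := by
      exact_mod_cast Nat.lt_of_not_le (Nat.find_min hex (by omega))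
    have hceil : (⌈ρ ^ (b + 1)⌉₊ : ℝ) < ρ ^ (b + 1) + 1 := Nat.ceil_lt_add_one (by positivity)
    rw [h] at hle
    nlinarith [Nat.le_ceil (ρ ^ b), pow_succ ρ b]

lemma hasSum_Block_mul {p : ℕ → ℝ} (hp : ∀ j, 1 ≤ j → 0 ≤ p j)
    {G : ℕ → ℝ} (hG : ∀ n, 0 ≤ G n) {a : ℝ}
    (hs : HasSum (fun j => p (j + 1) * G (blockEnd ρ (j + 1))) a) :
    HasSum (fun i => Block p ρ i * G i) a := by
  have hblocks := hasSum_sum_Icc_of_strictMono (Ienum_strictMono hρ) rfl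
    (f := fun j => p j * G (blockEnd ρ j)) (fun j hj => mul_nonneg (hp j hj) (hG _)) hs
  rw [← (Ienum_succ_injective hρ).hasSum_iff fun i hi => by rw [Block_eq_zero p hi, zero_mul]]
  convert hblocks using 2 with k
  rw [Function.comp_apply, Block_Ienum_succ hρ, sum_mul]
  refine sum_congr rfl fun j hj => ?_
  rw [mem_Icc] at hj
  rw [blockEnd_eq hρ (by omega) hj.2]

end Blocks

lemma abs_avgUq_sub_avgUq_blockEnd_le {q : ℕ → ℝ} (hq : ∀ i, 1 ≤ i → q i ∈ Set.Icc (0 : ℝ) 1)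
    {ρ : ℝ} (hρ : 1 < ρ) {j : ℕ} (hj : 1 ≤ j) :
    |avgUq q j - avgUq q (blockEnd ρ j)| ≤ ρ - 1 := by
  have hj' : (0 : ℝ) < j := by exact_mod_cast hj
  refine (abs_avgUq_sub_avgUq_le hq hj (le_blockEnd hρ j)).trans ?_
  rw [div_le_iff₀ hj']
  linarith [blockEnd_le_mul hρ hj]

theorem stmt6 (p : ℕ → ℝ) (hp : ∀ i, 1 ≤ i → 0 ≤ p i)
    (hps : HasSum (fun i : ℕ => p (i + 1)) 1)
    (q : ℕ → ℝ) (hq : ∀ i, 1 ≤ i → q i ∈ Set.Icc (0 : ℝ) 1)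
    (ρ : ℝ) (hρ : 1 < ρ) :
    |A p q - A (Block p ρ) q| ≤ ρ - 1 := by
  have hpsum : Summable p := (summable_nat_add_iff 1).1 hps.summable
  have hBlock : HasSum (Block p ρ) 1 := by
    simpa using hasSum_Block_mul hρ hp (G := fun _ => 1) (fun _ => zero_le_one) (by simpa using hps)
  have hBlock_avg := hasSum_Block_mul hρ hp (fun n => (avgUq_mem_Icc hq n).1)
    (summable_mul_avgUq_comp hq hps.summable fun j => blockEnd ρ (j + 1)).hasSum
  rw [A_eq_tsum hq hp hpsum, A_eq_tsum hq (fun i _ => Block_nonneg hp i) hBlock.summable,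
    hBlock_avg.tsum_eq, (summable_mul_avgUq_comp hq hpsum fun l => l).tsum_eq_zero_add,
    avgUq_zero, mul_zero, zero_add]
  exact abs_tsum_mul_sub_tsum_mul_le (fun j => hp (j + 1) j.succ_pos) hps
    (summable_mul_avgUq_comp hq hps.summable _) (summable_mul_avgUq_comp hq hps.summable _)
    fun j => abs_avgUq_sub_avgUq_blockEnd_le hq hρ j.succ_pos
end

section
/- Let c_0 > 0, let f : ℕ → ℝ_{>0} be a nondecreasing positive function, and let M : ℕ × ℕ → ℝ satisfy M(s,n) ≥ c_0·(f(s)/f(n)) whenever s ≤ n and M(s,n) ≥ 0 otherwise. Then for any integers n_ ≤ n̄ there exists a probability vector x supported on {n_, n_+1, ..., n̄} such that for every n ∈ {n_, ..., n̄}, Σ_{s=n_}^{n̄} x_s · M(s,n) ≥ c_0 / (1 + log(f(n̄)/f(n_))). -/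
/-!
Put weight `1` on `nlo` and weight `1 - f (s - 1) / f s` on each later `s`. These weights
telescope: `∑_{s = nlo}^{n} w s * f s = f n`, so the lower bound on `M` gives
`∑ s, w s * M s n ≥ c₀` for every `n`, while `1 - 1/t ≤ log t` bounds the total weight by
`1 + log (f nhi / f nlo)`. Normalising the weights gives the probability vector.
-/

open Finset Real

noncomputable def telescopeWeight (f : ℕ → ℝ) (a s : ℕ) : ℝ :=
  if s = a then 1 else 1 - f (s - 1) / f s

section

variable {f : ℕ → ℝ} {a : ℕ}

theorem telescopeWeight_self : telescopeWeight f a a = 1 := if_pos rfl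

theorem telescopeWeight_succ {n : ℕ} (hn : a ≤ n) :
    telescopeWeight f a (n + 1) = 1 - f n / f (n + 1) := by
  rw [telescopeWeight, if_neg (by omega), Nat.add_sub_cancel]

theorem telescopeWeight_nonneg (hf : ∀ n, 0 < f n) (hmono : Monotone f) (s : ℕ) :
    0 ≤ telescopeWeight f a s := by
  unfold telescopeWeight
  split_ifs
  · exact zero_le_one
  · rw [sub_nonneg, div_le_one (hf s)]
    exact hmono (Nat.sub_le s 1)

theorem sum_telescopeWeight_mul_self (hf : ∀ n, f n ≠ 0) {n : ℕ} (hn : a ≤ n) :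
    ∑ s ∈ Icc a n, telescopeWeight f a s * f s = f n := by
  induction n, hn using Nat.le_induction with
  | base => simp [telescopeWeight_self]
  | succ n hn ih =>
    rw [sum_Icc_succ_top (by omega), ih, telescopeWeight_succ hn, sub_mul,
      div_mul_cancel₀ _ (hf (n + 1))]
    ring

theorem one_sub_div_le_log_div {x y : ℝ} (hx : 0 < x) (hy : 0 < y) :
    1 - x / y ≤ log (y / x) := by
  simpa using one_sub_inv_le_log_of_pos (div_pos hy hx)

theorem sum_telescopeWeight_le_one_add_log (hf : ∀ n, 0 < f n) {n : ℕ} (hn : a ≤ n) :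
    ∑ s ∈ Icc a n, telescopeWeight f a s ≤ 1 + log (f n / f a) := by
  induction n, hn using Nat.le_induction with
  | base => simp [telescopeWeight_self]
  | succ n hn ih =>
    have hstep : log (f (n + 1) / f a) = log (f n / f a) + log (f (n + 1) / f n) := by
      rw [log_div (hf _).ne' (hf _).ne', log_div (hf _).ne' (hf _).ne',
        log_div (hf _).ne' (hf _).ne']
      ring
    rw [sum_Icc_succ_top (by omega), telescopeWeight_succ hn, hstep]
    linarith [one_sub_div_le_log_div (hf n) (hf (n + 1))]

theorem one_le_sum_telescopeWeight (hf : ∀ n, 0 < f n) (hmono : Monotone f) {b : ℕ}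
    (hab : a ≤ b) : 1 ≤ ∑ s ∈ Icc a b, telescopeWeight f a s := by
  calc (1 : ℝ) = telescopeWeight f a a := telescopeWeight_self.symm
    _ ≤ _ := single_le_sum (fun s _ => telescopeWeight_nonneg hf hmono s)
        (mem_Icc.2 ⟨le_rfl, hab⟩)

theorem le_sum_telescopeWeight_mul {c₀ : ℝ} (hf : ∀ n, 0 < f n) (hmono : Monotone f)
    {M : ℕ → ℕ → ℝ} (hM : ∀ s n, s ≤ n → c₀ * (f s / f n) ≤ M s n)
    (hM0 : ∀ s n, n < s → 0 ≤ M s n) {b n : ℕ} (han : a ≤ n) (hnb : n ≤ b) :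
    c₀ ≤ ∑ s ∈ Icc a b, telescopeWeight f a s * M s n := by
  have hw := telescopeWeight_nonneg (a := a) hf hmono
  calc c₀ = c₀ / f n * ∑ s ∈ Icc a n, telescopeWeight f a s * f s := by
        rw [sum_telescopeWeight_mul_self (fun n => (hf n).ne') han, div_mul_cancel₀ _ (hf n).ne']
    _ = ∑ s ∈ Icc a n, telescopeWeight f a s * (c₀ * (f s / f n)) := by
        rw [mul_sum]
        exact sum_congr rfl fun s _ => by ring
    _ ≤ ∑ s ∈ Icc a n, telescopeWeight f a s * M s n :=
        sum_le_sum fun s hs => mul_le_mul_of_nonneg_left (hM s n (mem_Icc.1 hs).2) (hw s)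
    _ ≤ ∑ s ∈ Icc a b, telescopeWeight f a s * M s n := by
        refine sum_le_sum_of_subset_of_nonneg (Icc_subset_Icc_right hnb) fun s hsb hsn => ?_
        have hns : n < s := by
          have := mem_Icc.1 hsb
          by_contra! hsn'
          exact hsn (mem_Icc.2 ⟨this.1, hsn'⟩)
        exact mul_nonneg (hw s) (hM0 s n hns)

end

theorem stmt10 (c₀ : ℝ) (hc₀ : 0 < c₀) (f : ℕ → ℝ) (hfpos : ∀ n, 0 < f n)
    (hfmono : Monotone f) (M : ℕ → ℕ → ℝ)
    (hM : ∀ s n, s ≤ n → c₀ * (f s / f n) ≤ M s n)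
    (hM0 : ∀ s n, n < s → 0 ≤ M s n)
    (nlo nhi : ℕ) (h : nlo ≤ nhi) :
    ∃ x : ℕ → ℝ, (∀ s, 0 ≤ x s) ∧ (∀ s, s < nlo ∨ nhi < s → x s = 0) ∧
      (∑ s ∈ Finset.Icc nlo nhi, x s = 1) ∧
      ∀ n, nlo ≤ n → n ≤ nhi →
        c₀ / (1 + Real.log (f nhi / f nlo)) ≤ ∑ s ∈ Finset.Icc nlo nhi, x s * M s n := by
  set w := telescopeWeight f nlo
  set W := ∑ s ∈ Icc nlo nhi, w s
  have hw : ∀ s, 0 ≤ w s := telescopeWeight_nonneg hfpos hfmono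
  have hW : 1 ≤ W := one_le_sum_telescopeWeight hfpos hfmono h
  have hWlog : W ≤ 1 + log (f nhi / f nlo) := sum_telescopeWeight_le_one_add_log hfpos h
  refine ⟨fun s => if s ∈ Icc nlo nhi then w s / W else 0, fun s => ?_, fun s hs => ?_, ?_,
    fun n hlo hhi => ?_⟩
  · dsimp only
    split_ifs
    exacts [div_nonneg (hw s) (by linarith), le_rfl]
  · dsimp only
    rw [if_neg (by rw [mem_Icc]; omega)]
  · dsimp only
    rw [sum_congr rfl fun s hs => if_pos hs, ← sum_div, div_self (by linarith)]
  · calc c₀ / (1 + log (f nhi / f nlo)) ≤ c₀ / W :=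
          div_le_div_of_nonneg_left hc₀.le (by linarith) hWlog
      _ ≤ (∑ s ∈ Icc nlo nhi, w s * M s n) / W := by
          gcongr
          exact le_sum_telescopeWeight_mul hfpos hfmono hM hM0 hlo hhi
      _ = _ := by
          rw [sum_div]
          refine sum_congr rfl fun s hs => ?_
          dsimp only
          rw [if_pos hs]
          ring
end

section
/- Let n ≥ 2 and 0 < a_1 ≤ a_2 ≤ ⋯ ≤ a_n, and set c = (n − Σ_{i=1}^{n−1} a_i/a_{i+1})^{−1}, p_l = c·(1 − a_l/a_{l+1}) for l = 1,...,n−1 and p_n = c. Then (p_1,...,p_n) is a probability vector, and for every probability vector (q_1,...,q_n), Σ_{i=1}^{n} q_i · (Σ_{j=i}^{n} (a_i/a_j)·p_j) = c. Moreover, if a_i = x^{(n−i)/(n−1)} for some x ∈ (0,1], then c = (1 + (n−1)(1 − x^{1/(n−1)}))^{−1}, and this quantity converges to 1/(1 + log(1/x)) as n → ∞. -/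
/-!
Each weight telescopes against the ratios of consecutive terms:
`(a i / a j) * p j = c * a i * (1 / a j - 1 / a (j + 1))` for `j < n`, so for every `i` the inner sum
`∑_{j ≥ i} (a i / a j) * p j` collapses to `c * a i / a i = c`, whatever `q` is. For the geometric
choice of `a` all consecutive ratios equal `x ^ (1 / (n - 1))`, and
`t * (1 - x ^ (1 / t)) → -log x` as `t → ∞` is the derivative of `s ↦ x ^ s` at `s = 0`.
-/

open Filter Topology Real Finset

lemma natCast_card_Icc_one_sub_one {n : ℕ} (hn : 1 ≤ n) :
    ((#(Icc 1 (n - 1)) : ℕ) : ℝ) = n - 1 := by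
  rw [Nat.card_Icc, Nat.add_sub_cancel, Nat.cast_sub hn, Nat.cast_one]

lemma tendsto_mul_one_sub_rpow_one_div {x : ℝ} (hx : 0 < x) :
    Tendsto (fun t : ℝ => t * (1 - x ^ (1 / t))) atTop (𝓝 (-log x)) := by
  refine ((tendsto_rpow_sub_one_log hx).comp tendsto_inv_atTop_nhdsGT_zero).neg.congr fun t => ?_
  simp only [Function.comp, inv_inv, one_div]
  ring

section Ratios

variable {n : ℕ} {a : ℕ → ℝ}

lemma pos_of_pos_of_le_succ (ha1 : 0 < a 1) (hmono : ∀ i, 1 ≤ i → i < n → a i ≤ a (i + 1)) :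
    ∀ i, 1 ≤ i → i ≤ n → 0 < a i := by
  intro i hi
  induction i, hi using Nat.le_induction with
  | base => exact fun _ => ha1
  | succ k hk ih => exact fun hkn => (ih (by omega)).trans_le (hmono k hk (by omega))

lemma sum_Icc_div_succ_le (hn : 1 ≤ n) (hpos : ∀ i, 1 ≤ i → i ≤ n → 0 < a i)
    (hmono : ∀ i, 1 ≤ i → i < n → a i ≤ a (i + 1)) :
    ∑ i ∈ Icc 1 (n - 1), a i / a (i + 1) ≤ n - 1 := by
  rw [← natCast_card_Icc_one_sub_one hn, ← nsmul_one]
  refine sum_le_card_nsmul _ _ _ fun i hi => ?_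
  rw [mem_Icc] at hi
  exact (div_le_one (hpos (i + 1) (by omega) (by omega))).2 (hmono i hi.1 (by omega))

lemma sum_Icc_div_succ_of_eq_rpow {x : ℝ} (hn : 1 ≤ n) (hx : 0 < x)
    (ha : ∀ i, 1 ≤ i → i ≤ n → a i = x ^ (((n : ℝ) - (i : ℝ)) / ((n : ℝ) - 1))) :
    ∑ i ∈ Icc 1 (n - 1), a i / a (i + 1) = (n - 1) * x ^ (1 / ((n : ℝ) - 1)) := by
  have hratio : ∀ i ∈ Icc 1 (n - 1), a i / a (i + 1) = x ^ (1 / ((n : ℝ) - 1)) := fun i hi => by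
    rw [mem_Icc] at hi
    rw [ha i hi.1 (by omega), ha (i + 1) (by omega) (by omega), ← rpow_sub hx]
    congr 1
    push_cast
    ring
  rw [sum_congr rfl hratio, sum_const, nsmul_eq_mul, natCast_card_Icc_one_sub_one hn]

variable (c : ℝ) {p : ℕ → ℝ}

lemma sum_Icc_div_mul_eq (hp : ∀ l, p l = if l = n then c else c * (1 - a l / a (l + 1)))
    {i : ℕ} (hi : i ≤ n) (ha : ∀ j, i ≤ j → j ≤ n → a j ≠ 0) :
    ∑ j ∈ Icc i n, a i / a j * p j = c := by
  induction hi using Nat.decreasingInduction with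
  | self => simp [hp, div_self (ha n le_rfl le_rfl)]
  | of_succ k hk ih =>
    have hsplit : ∑ j ∈ Icc k n, a k / a j * p j
        = p k + a k / a (k + 1) * ∑ j ∈ Icc (k + 1) n, a (k + 1) / a j * p j := by
      rw [Icc_eq_cons_Ioc hk.le, sum_cons, ← Icc_add_one_left_eq_Ioc, mul_sum,
        div_self (ha k le_rfl hk.le), one_mul]
      refine congrArg _ (sum_congr rfl fun j hj => ?_)
      rw [mem_Icc] at hj
      field_simp [ha j (by omega) hj.2, ha (k + 1) (by omega) (by omega)]
    rw [hsplit, ih fun j hj hjn => ha j (by omega) hjn, hp k, if_neg hk.ne]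
    ring

lemma sum_Icc_one_eq (hp : ∀ l, p l = if l = n then c else c * (1 - a l / a (l + 1)))
    (hn : 1 ≤ n) : ∑ l ∈ Icc 1 n, p l = c * (n - ∑ i ∈ Icc 1 (n - 1), a i / a (i + 1)) := by
  obtain ⟨m, rfl⟩ : ∃ m, n = m + 1 := ⟨n - 1, by omega⟩
  have hp' : ∀ l ∈ Icc 1 m, p l = c - c * (a l / a (l + 1)) := fun l hl => by
    rw [mem_Icc] at hl
    rw [hp l, if_neg (by omega)]
    ring
  rw [sum_Icc_succ_top (by omega), sum_congr rfl hp', sum_sub_distrib, sum_const, ← mul_sum,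
    hp, if_pos rfl, Nat.card_Icc, Nat.add_sub_cancel, nsmul_eq_mul]
  push_cast
  ring

end Ratios

theorem stmt11 (n : ℕ) (hn : 2 ≤ n) (a : ℕ → ℝ)
    (ha1 : 0 < a 1) (hamono : ∀ i, 1 ≤ i → i < n → a i ≤ a (i + 1))
    (c : ℝ) (hc : c = ((n : ℝ) - ∑ i ∈ Finset.Icc 1 (n - 1), a i / a (i + 1))⁻¹)
    (p : ℕ → ℝ) (hpdef : ∀ l, p l = if l = n then c else c * (1 - a l / a (l + 1))) :
    (∀ l, 1 ≤ l → l ≤ n → 0 ≤ p l) ∧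
    (∑ l ∈ Finset.Icc 1 n, p l = 1) ∧
    (∀ q : ℕ → ℝ, (∀ i, 1 ≤ i → i ≤ n → 0 ≤ q i) → (∑ i ∈ Finset.Icc 1 n, q i = 1) →
      ∑ i ∈ Finset.Icc 1 n, q i * (∑ j ∈ Finset.Icc i n, (a i / a j) * p j) = c) ∧
    (∀ x : ℝ, 0 < x → x ≤ 1 →
      (∀ i, 1 ≤ i → i ≤ n → a i = x ^ (((n : ℝ) - (i : ℝ)) / ((n : ℝ) - 1))) →
      c = (1 + ((n : ℝ) - 1) * (1 - x ^ ((1 : ℝ) / ((n : ℝ) - 1))))⁻¹) ∧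
    (∀ x : ℝ, 0 < x → x ≤ 1 →
      Filter.Tendsto (fun m : ℕ => (1 + ((m : ℝ) - 1) * (1 - x ^ ((1 : ℝ) / ((m : ℝ) - 1))))⁻¹)
        Filter.atTop (nhds (1 / (1 + Real.log (1 / x))))) := by
  have hn1 : 1 ≤ n := by omega
  have hpos := pos_of_pos_of_le_succ ha1 hamono
  have hgap : 1 ≤ (n : ℝ) - ∑ i ∈ Icc 1 (n - 1), a i / a (i + 1) := by
    linarith [sum_Icc_div_succ_le hn1 hpos hamono]
  have hc0 : 0 < c := hc ▸ inv_pos.2 (by linarith)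
  refine ⟨fun l hl hln => ?_, ?_, fun q _ hq => ?_, fun x hx _ hax => ?_, fun x hx hx1 => ?_⟩
  · rw [hpdef]
    split_ifs
    · exact hc0.le
    · exact mul_nonneg hc0.le <| sub_nonneg.2 <|
        (div_le_one (hpos (l + 1) (by omega) (by omega))).2 (hamono l hl (by omega))
  · rw [sum_Icc_one_eq c hpdef hn1, hc, inv_mul_cancel₀ (by linarith)]
  · have hinner : ∀ i ∈ Icc 1 n, q i * ∑ j ∈ Icc i n, a i / a j * p j = q i * c := by
      intro i hi
      rw [mem_Icc] at hi
      rw [sum_Icc_div_mul_eq c hpdef hi.2 fun j hj hjn => (hpos j (by omega) hjn).ne']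
    rw [sum_congr rfl hinner, ← sum_mul, hq, one_mul]
  · rw [hc, sum_Icc_div_succ_of_eq_rpow hn1 hx hax]
    ring
  · have hlim := (tendsto_mul_one_sub_rpow_one_div hx).comp
      (tendsto_atTop_add_const_right atTop (-1) tendsto_natCast_atTop_atTop)
    rw [one_div (1 + _), one_div x, log_inv]
    exact (tendsto_const_nhds.add hlim).inv₀ (by linarith [log_nonpos hx.le hx1])
end

section
/- Define h̄(z) = z^{−z/(2(z−1))} − z^{−1/(z−1)} for z > 1. Let n, K ∈ ℕ with n ≥ 2 and K^{1/(n−1)} ≥ 2, and let ξ ≥ (n−1)·(1 + h̄(K^{1/(n−1)})). Then there exist reals 0 = g_0 ≤ g_1 ≤ ⋯ ≤ g_{n−1} ≤ g_n = 1 and positive integers k_1 ≤ k_2 ≤ ⋯ ≤ k_n ≤ K such that Σ_{i=1}^{n} (1 − (g_i^{k_i} − g_{i−1}^{k_i})) ≤ ξ. -/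
/-!
With `z = K^{1/(n-1)}` take `c = z^{-1/(z-1)}`, exponents `k_i = ⌈z^{i-1}⌉` (so `k_n = K`) and
levels `g_i = c^{1/k_i}` for `0 < i < n`. Each of the first `n - 1` terms then contributes
`1 - g_i^{k_i} = 1 - c`, while every term after the first carries the error
`g_{i-1}^{k_i} = c^{k_i/k_{i-1}} ≤ c^{z/2}`, since consecutive ceilings of powers of `z` grow by a
factor of at least `z / 2`. As `c^{z/2} - c = h̄(z)`, the sum is at most `(n - 1)(1 + h̄(z))`.
-/

open scoped BigOperators

/-- `h̄(z) = z^{-z/(2(z-1))} - z^{-1/(z-1)}`. -/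
noncomputable def hbar (z : ℝ) : ℝ := z ^ (-(z / (2 * (z - 1)))) - z ^ (-(1 / (z - 1)))

open Finset

theorem Finset.sum_Icc_one_eq_sum_range {M : Type*} [AddCommMonoid M] (f : ℕ → M) (n : ℕ) :
    ∑ i ∈ Icc 1 n, f i = ∑ j ∈ range n, f (j + 1) := by
  rw [range_eq_Ico, sum_Ico_add']
  rfl

noncomputable def levels (n : ℕ) (c : ℝ) (k : ℕ → ℕ) (i : ℕ) : ℝ :=
  if i = 0 then 0 else if i < n then c ^ ((k i : ℝ)⁻¹) else 1

section levels

variable {n : ℕ} {c r : ℝ} {k : ℕ → ℕ}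

@[simp] theorem levels_zero : levels n c k 0 = 0 := rfl

theorem levels_of_le {i : ℕ} (hi0 : i ≠ 0) (hi : n ≤ i) : levels n c k i = 1 := by
  simp [levels, hi0, hi]

theorem levels_of_lt {i : ℕ} (hi0 : i ≠ 0) (hi : i < n) : levels n c k i = c ^ ((k i : ℝ)⁻¹) := by
  simp [levels, hi0, hi]

theorem levels_pow_self {i : ℕ} (hc : 0 ≤ c) (hk : k i ≠ 0) (hi0 : i ≠ 0) (hi : i < n) :
    levels n c k i ^ k i = c := by
  rw [levels_of_lt hi0 hi, Real.rpow_inv_natCast_pow hc hk]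

theorem levels_pow_succ_le {i : ℕ} (hc0 : 0 < c) (hc1 : c ≤ 1) (hk : 0 < k i)
    (hgrowth : r * k i ≤ k (i + 1)) (hi0 : i ≠ 0) (hi : i < n) :
    levels n c k i ^ k (i + 1) ≤ c ^ r := by
  rw [levels_of_lt hi0 hi, ← Real.rpow_natCast, ← Real.rpow_mul hc0.le]
  refine Real.rpow_le_rpow_of_exponent_ge hc0 hc1 ?_
  rw [inv_mul_eq_div, le_div_iff₀ (by exact_mod_cast hk)]
  exact hgrowth

theorem levels_le_succ (hc0 : 0 < c) (hc1 : c ≤ 1) (hk : ∀ i, 0 < k i) (hmono : Monotone k)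
    {i : ℕ} (hi : i < n) : levels n c k i ≤ levels n c k (i + 1) := by
  rcases Nat.eq_zero_or_pos i with rfl | hi0
  · rw [levels_zero]
    unfold levels
    split_ifs <;> positivity
  rcases Nat.lt_or_ge (i + 1) n with hi1 | hi1
  · rw [levels_of_lt hi0.ne' hi, levels_of_lt (Nat.succ_ne_zero i) hi1]
    refine Real.rpow_le_rpow_of_exponent_ge hc0 hc1 (inv_anti₀ ?_ ?_)
    · exact_mod_cast hk i
    · exact_mod_cast hmono i.le_succ
  · rw [levels_of_le (Nat.succ_ne_zero i) hi1, levels_of_lt hi0.ne' hi]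
    exact Real.rpow_le_one hc0.le hc1 (by positivity)

theorem sum_levels_le (hn : n ≠ 0) (hc0 : 0 < c) (hc1 : c ≤ 1) (hk : ∀ i, 0 < k i)
    (hgrowth : ∀ i, i ≠ 0 → i < n → r * k i ≤ k (i + 1)) :
    ∑ i ∈ Icc 1 n, (1 - (levels n c k i ^ k i - levels n c k (i - 1) ^ k i)) ≤
      ((n : ℝ) - 1) * (1 - c + c ^ r) := by
  obtain ⟨m, rfl⟩ := Nat.exists_eq_succ_of_ne_zero hn
  have hfirst : ∑ j ∈ range (m + 1), (1 - levels (m + 1) c k (j + 1) ^ k (j + 1)) =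
      m * (1 - c) := by
    rw [sum_range_succ, levels_of_le m.succ_ne_zero le_rfl, one_pow, sub_self, add_zero]
    rw [sum_congr rfl fun j hj => by
      rw [levels_pow_self hc0.le (hk _).ne' j.succ_ne_zero (by simpa using mem_range.1 hj)]]
    rw [sum_const, card_range, nsmul_eq_mul]
  have hsecond : ∑ j ∈ range (m + 1), levels (m + 1) c k j ^ k (j + 1) ≤ m * c ^ r := by
    rw [sum_range_succ', levels_zero, zero_pow (hk 1).ne', add_zero]
    calc ∑ j ∈ range m, levels (m + 1) c k (j + 1) ^ k (j + 1 + 1)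
        ≤ ∑ j ∈ range m, c ^ r := sum_le_sum fun j hj => by
          have hj : j + 1 < m + 1 := Nat.succ_lt_succ (mem_range.1 hj)
          exact levels_pow_succ_le hc0 hc1 (hk _) (hgrowth _ j.succ_ne_zero hj) j.succ_ne_zero hj
      _ = m * c ^ r := by rw [sum_const, card_range, nsmul_eq_mul]
  rw [sum_Icc_one_eq_sum_range]
  simp only [Nat.add_sub_cancel, sub_sub_eq_add_sub, add_sub_right_comm, sum_add_distrib]
  push_cast
  linarith

end levels

theorem half_mul_ceil_pow_le_ceil_pow_succ {z : ℝ} (hz : 1 ≤ z) (j : ℕ) :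
    z / 2 * ⌈z ^ j⌉₊ ≤ ⌈z ^ (j + 1)⌉₊ := by
  have hceil : (⌈z ^ j⌉₊ : ℝ) ≤ 2 * z ^ j := by
    linarith [Nat.ceil_lt_add_one (by positivity : (0 : ℝ) ≤ z ^ j), one_le_pow₀ (n := j) hz]
  calc z / 2 * ⌈z ^ j⌉₊ ≤ z / 2 * (2 * z ^ j) := by gcongr
    _ = z ^ (j + 1) := by ring
    _ ≤ ⌈z ^ (j + 1)⌉₊ := Nat.le_ceil _

theorem hbar_eq {z : ℝ} (hz : 0 ≤ z) :
    hbar z = (z ^ (-(1 / (z - 1)))) ^ (z / 2) - z ^ (-(1 / (z - 1))) := by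
  rw [hbar, ← Real.rpow_mul hz, mul_comm 2, ← div_div]
  ring_nf

theorem rpow_one_div_natCast_sub_one_pow {x : ℝ} (hx : 0 ≤ x) {n : ℕ} (hn : 1 < n) :
    (x ^ ((1 : ℝ) / ((n : ℝ) - 1))) ^ (n - 1) = x := by
  rw [one_div, ← Nat.cast_pred (by omega), Real.rpow_inv_natCast_pow hx (by omega)]

theorem stmt12 (n K : ℕ) (hn : 2 ≤ n)
    (hK : (2 : ℝ) ≤ (K : ℝ) ^ ((1 : ℝ) / ((n : ℝ) - 1)))
    (ξ : ℝ) (hξ : ((n : ℝ) - 1) * (1 + hbar ((K : ℝ) ^ ((1 : ℝ) / ((n : ℝ) - 1)))) ≤ ξ) :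
    ∃ g : ℕ → ℝ, ∃ k : ℕ → ℕ,
      g 0 = 0 ∧ g n = 1 ∧ (∀ i, i < n → g i ≤ g (i + 1)) ∧
      (∀ i, 1 ≤ i → i ≤ n → 1 ≤ k i) ∧
      (∀ i, 1 ≤ i → i < n → k i ≤ k (i + 1)) ∧
      (∀ i, 1 ≤ i → i ≤ n → k i ≤ K) ∧
      ∑ i ∈ Finset.Icc 1 n, (1 - (g i ^ k i - g (i - 1) ^ k i)) ≤ ξ := by
  set z := (K : ℝ) ^ ((1 : ℝ) / ((n : ℝ) - 1))
  set c := z ^ (-(1 / (z - 1)))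
  have hz : 1 ≤ z := by linarith
  have hc0 : 0 < c := by positivity
  have hc1 : c ≤ 1 :=
    Real.rpow_le_one_of_one_le_of_nonpos hz (neg_nonpos.2 (one_div_nonneg.2 (sub_nonneg.2 hz)))
  set k : ℕ → ℕ := fun i => ⌈z ^ (i - 1)⌉₊
  have hk : ∀ i, 0 < k i := fun i => Nat.ceil_pos.2 (by positivity)
  have hmono : Monotone k := fun i j hij =>
    Nat.ceil_mono (pow_le_pow_right₀ hz (Nat.sub_le_sub_right hij 1))
  have hzK : z ^ (n - 1) = K := rpow_one_div_natCast_sub_one_pow (Nat.cast_nonneg K) hn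
  have hkn : k n = K := by simp only [k, hzK, Nat.ceil_natCast]
  have hgrowth : ∀ i, i ≠ 0 → i < n → z / 2 * k i ≤ k (i + 1) := fun i hi _ => by
    simpa [k, Nat.sub_add_cancel (Nat.one_le_iff_ne_zero.2 hi)] using
      half_mul_ceil_pow_le_ceil_pow_succ hz (i - 1)
  refine ⟨levels n c k, k, levels_zero, levels_of_le (by omega) le_rfl,
    fun i hi => levels_le_succ hc0 hc1 hk hmono hi, fun i _ _ => hk i,
    fun i _ _ => hmono i.le_succ, fun i _ hi => hkn ▸ hmono hi, ?_⟩
  calc _ ≤ ((n : ℝ) - 1) * (1 - c + c ^ (z / 2)) :=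
        sum_levels_le (by omega) hc0 hc1 hk hgrowth
    _ = ((n : ℝ) - 1) * (1 + hbar z) := by rw [hbar_eq (by positivity)]; ring
    _ ≤ ξ := hξ
end

section
/- Let T ≥ 3 be an integer and let s* ≥ 2 be an integer satisfying Σ_{i=s*}^{T−1} 1/i ≤ 1 and Σ_{i=s*−1}^{T−1} 1/i > 1. Then ((s* − 1)/T) · Σ_{i=s*−1}^{T−1} 1/i ≥ 1/e. -/
/-!
Write `a = s - 1` and `S = ∑_{a ≤ i < T} 1/i`; the claim is `T ≤ e·a·S`. Since `log u ≤ sinh (log u)`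
for `u ≥ 1`, one step of the trapezoid rule overestimates `∫ dx/x`, which gives
`∑_{a ≤ i < N} 1/i ≥ log (N/a) + 1/(2a) - 1/(2N)`. Applied to `S` and to `S - 1/a ≤ 1`, it shows that
`u = log (T/a) - 1` satisfies `u ≤ 1/(2a) + 1/(2T)` and `S ≥ 1 + u + 1/(2a) - 1/(2T)`. For `a ≥ 2`
and `u > 0` this beats `exp u ≤ 1 + u + u²`, so `T = e·a·exp u ≤ e·a·S` (for `u ≤ 0` use `S > 1`).
For `a = 1` only `T ∈ {3, 4}` is possible, and `T ≤ 4 < 3e/2 ≤ e·S`.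
-/

open Real Finset

lemma log_le_half_sub_inv {u : ℝ} (hu : 1 ≤ u) : log u ≤ (u - u⁻¹) / 2 := by
  rw [← sinh_log (by linarith)]
  exact self_le_sinh_iff.mpr (log_nonneg hu)

lemma log_add_one_sub_log_le {x : ℝ} (hx : 0 < x) :
    log (x + 1) - log x ≤ 1 / (2 * x) + 1 / (2 * (x + 1)) := by
  have hu : 1 ≤ (x + 1) / x := by rw [le_div_iff₀ hx]; linarith
  calc log (x + 1) - log x = log ((x + 1) / x) := (log_div (by linarith) hx.ne').symm
    _ ≤ ((x + 1) / x - ((x + 1) / x)⁻¹) / 2 := log_le_half_sub_inv hu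
    _ = 1 / (2 * x) + 1 / (2 * (x + 1)) := by field_simp; ring

lemma log_sub_log_add_le_sum_Ico_one_div {a N : ℕ} (ha : 1 ≤ a) (haN : a ≤ N) :
    log N - log a + 1 / (2 * a) - 1 / (2 * N) ≤ ∑ i ∈ Ico a N, (1 : ℝ) / i := by
  induction N, haN using Nat.le_induction with
  | base => simp
  | succ N hN ih =>
    have hN0 : (0 : ℝ) < N := by exact_mod_cast (by omega : 0 < N)
    have hstep := log_add_one_sub_log_le hN0
    have hhalf : (1 : ℝ) / N = 1 / (2 * N) + 1 / (2 * N) := by field_simp; ring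
    rw [sum_Ico_succ_top hN]
    push_cast
    linarith

lemma exp_le_one_add_add_sq {u : ℝ} (hu : |u| ≤ 1) : exp u ≤ 1 + u + u ^ 2 := by
  linarith [(abs_le.mp (abs_exp_sub_one_sub_id_le hu)).2]

lemma le_exp_one_mul_mul_of_log_sub_log_le {A B S : ℝ} (hA : 2 ≤ A) (hB : 0 < B) (hS : 1 < S)
    (hlow : log B - log A + 1 / (2 * A) - 1 / (2 * B) ≤ S)
    (hup : log B - log A ≤ 1 + 1 / (2 * A) + 1 / (2 * B)) :
    B ≤ exp 1 * A * S := by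
  have hA0 : 0 < A := by linarith
  set u := log B - log A - 1 with hu
  have hB_eq : B = exp 1 * A * exp u := by
    rw [hu, mul_comm (exp 1), mul_assoc, ← exp_add, add_sub_cancel, exp_sub, exp_log hB,
      exp_log hA0, mul_div_cancel₀ _ hA0.ne']
  rcases le_or_gt u 0 with hu0 | hu0
  · calc B = exp 1 * A * exp u := hB_eq
      _ ≤ exp 1 * A * S := by gcongr; linarith [exp_le_one_iff.mpr hu0]
  set p := 1 / (2 * A)
  set q := 1 / (2 * B)
  have hp : p ≤ 1 / 4 := by rw [div_le_div_iff₀ (by positivity) (by norm_num)]; linarith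
  have hq : 0 < q := by positivity
  have hqp : 27 / 10 * q ≤ p := by
    have he : 27 / 10 < exp 1 := by linarith [exp_one_gt_d9]
    have : 27 / 10 * A ≤ B := by
      rw [hB_eq]; nlinarith [one_lt_exp_iff.mpr hu0, mul_pos (exp_pos 1) hA0]
    simp only [p, q]
    rw [mul_one_div, div_le_div_iff₀ (by positivity) (by positivity)]; nlinarith
  have hupq : u ≤ p + q := by linarith
  have hsq : (p + q) ^ 2 ≤ p - q := by nlinarith
  have hexp : exp u ≤ S := by
    calc exp u ≤ 1 + u + u ^ 2 := exp_le_one_add_add_sq (abs_le.mpr ⟨by linarith, by linarith⟩)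
      _ ≤ 1 + u + (p + q) ^ 2 := by gcongr
      _ ≤ S := by linarith
  calc B = exp 1 * A * exp u := hB_eq
    _ ≤ exp 1 * A * S := by gcongr

lemma natCast_le_exp_one_mul_sum_Ico_one {N : ℕ} (hN : 3 ≤ N)
    (hR : ∑ i ∈ Ico 2 N, (1 : ℝ) / i ≤ 1) :
    (N : ℝ) ≤ exp 1 * ∑ i ∈ Ico 1 N, (1 : ℝ) / i := by
  have hsum_le {m n : ℕ} (h : n ≤ m) : ∑ i ∈ Ico 2 n, (1 : ℝ) / i ≤ ∑ i ∈ Ico 2 m, (1 : ℝ) / i :=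
    sum_le_sum_of_subset_of_nonneg (Ico_subset_Ico_right h) (fun _ _ _ ↦ by positivity)
  have hN4 : N ≤ 4 := by
    by_contra! h
    have h5 : ∑ i ∈ Ico (2 : ℕ) 5, (1 : ℝ) / i = 13 / 12 := by norm_num [sum_Ico_succ_top]
    linarith [hsum_le (show 5 ≤ N by omega)]
  have hR2 : 1 / 2 ≤ ∑ i ∈ Ico 2 N, (1 : ℝ) / i := by
    simpa [sum_Ico_succ_top] using hsum_le hN
  rw [sum_eq_sum_Ico_succ_bot (by omega)]
  have : (N : ℝ) ≤ 4 := by exact_mod_cast hN4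
  nlinarith [exp_one_gt_d9]

lemma natCast_le_exp_one_mul_mul_sum_Ico {a N : ℕ} (ha : 2 ≤ a)
    (hR : ∑ i ∈ Ico (a + 1) N, (1 : ℝ) / i ≤ 1) (hS : 1 < ∑ i ∈ Ico a N, (1 : ℝ) / i) :
    (N : ℝ) ≤ exp 1 * a * ∑ i ∈ Ico a N, (1 : ℝ) / i := by
  have haN : a < N := by
    by_contra! h
    rw [Ico_eq_empty_of_le h, sum_empty] at hS
    linarith
  have ha0 : (0 : ℝ) < a := by exact_mod_cast (by omega : 0 < a)
  have hlowR := log_sub_log_add_le_sum_Ico_one_div (by omega : 1 ≤ a + 1) haN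
  have hstep := log_add_one_sub_log_le ha0
  push_cast at hlowR
  exact le_exp_one_mul_mul_of_log_sub_log_le (by exact_mod_cast ha) (Nat.cast_pos.mpr (by omega))
    hS (log_sub_log_add_le_sum_Ico_one_div (by omega) haN.le) (by linarith)

theorem stmt13 (T s : ℕ) (hT : 3 ≤ T) (hs : 2 ≤ s)
    (h1 : ∑ i ∈ Finset.Icc s (T - 1), (1 : ℝ) / i ≤ 1)
    (h2 : 1 < ∑ i ∈ Finset.Icc (s - 1) (T - 1), (1 : ℝ) / i) :
    1 / Real.exp 1 ≤
      (((s : ℝ) - 1) / (T : ℝ)) * ∑ i ∈ Finset.Icc (s - 1) (T - 1), (1 : ℝ) / i := by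
  obtain ⟨a, rfl⟩ : ∃ a, s = a + 1 := ⟨s - 1, by omega⟩
  have hIcc (b : ℕ) : Icc b (T - 1) = Ico b T :=
    Icc_sub_one_right_eq_Ico_of_not_isMin (by rw [isMin_iff_eq_bot, Nat.bot_eq_zero]; omega) b
  simp only [hIcc, add_tsub_cancel_right, Nat.cast_add, Nat.cast_one] at *
  have hbound : (T : ℝ) ≤ exp 1 * a * ∑ i ∈ Ico a T, (1 : ℝ) / i := by
    rcases (by omega : a = 1 ∨ 2 ≤ a) with rfl | ha
    · simpa using natCast_le_exp_one_mul_sum_Ico_one hT h1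
    · exact natCast_le_exp_one_mul_mul_sum_Ico ha h1 h2
  rw [div_mul_eq_mul_div, div_le_div_iff₀ (exp_pos 1) (by positivity)]
  linarith
end

section
/- For α ∈ (0,1] define h_α : [0,1] → ℝ by h_α(x) = x^α · ((1/α + 1)/(1/α + x))^{α+1}. Then: (a) for each fixed x ∈ [0,1], h_α(x) is non-increasing in α; (b) for each fixed α ∈ (0,1], h_α(x) is non-decreasing in x; and (c) h_α(x) < 1 for every α ∈ (0,1] and x ∈ [0,1). -/
/-!
Work with `log h_α(x) = α log x + (α + 1) (log (1 + α) - log (1 + α x))`.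
Its `x`-derivative is `α (1 - x) / (x (1 + α x)) > 0` on `(0, 1)`, and `h_α(1) = 1`, which
gives (b) and (c). Its `α`-derivative is `log x + log ((1 + α)/(1 + α x)) + (1 - x)/(1 + α x)`;
by `log y ≤ y - 1` and `α ≤ 1` the last two terms are at most `2 (1 - x)/(1 + x)`, and the Padé
bound `log x ≤ 2 (x - 1)/(x + 1)` on `(0, 1]` makes the whole derivative nonpositive, giving (a).
-/

/-- `h_α(x) = x^α ((1/α + 1)/(1/α + x))^{α+1}` (real powers). -/
noncomputable def hfun (α x : ℝ) : ℝ := x ^ α * ((1 / α + 1) / (1 / α + x)) ^ (α + 1)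

open Real Set

noncomputable def logHfun (α x : ℝ) : ℝ :=
  α * log x + (α + 1) * (log (1 + α) - log (1 + α * x))

lemma hfun_eq_exp_logHfun {α x : ℝ} (hα : 0 < α) (hx : 0 < x) :
    hfun α x = exp (logHfun α x) := by
  have hquot : (1 / α + 1) / (1 / α + x) = (1 + α) / (1 + α * x) := by
    field_simp
  rw [hfun, hquot, rpow_def_of_pos hx, rpow_def_of_pos (by positivity),
    log_div (by positivity) (by positivity), ← exp_add, logHfun]
  ring_nf

lemma hfun_zero_right {α : ℝ} (hα : α ≠ 0) : hfun α 0 = 0 := by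
  rw [hfun, zero_rpow hα, zero_mul]

lemma hfun_one_right {α : ℝ} (hα : 0 < α) : hfun α 1 = 1 := by
  rw [hfun, one_rpow, div_self (by positivity), one_rpow, one_mul]

lemma log_le_two_mul_sub_one_div_add_one {x : ℝ} (hx : 0 < x) (hx1 : x ≤ 1) :
    log x ≤ 2 * (x - 1) / (x + 1) := by
  have h := le_log_one_add_of_nonneg (x := x⁻¹ - 1) (sub_nonneg.mpr ((one_le_inv₀ hx).mpr hx1))
  rw [add_sub_cancel, log_inv] at h
  have hrhs : 2 * (x⁻¹ - 1) / (x⁻¹ - 1 + 2) = - (2 * (x - 1) / (x + 1)) := by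
    rw [show x⁻¹ - 1 + 2 = x⁻¹ + 1 by ring]
    field_simp
    ring
  linarith

lemma hasDerivAt_logHfun_right {α x : ℝ} (hα : 0 < α) (hx : 0 < x) :
    HasDerivAt (logHfun α) (α * (1 - x) / (x * (1 + α * x))) x := by
  have hlin : HasDerivAt (fun t => 1 + α * t) α x := by
    simpa using ((hasDerivAt_id x).const_mul α).const_add 1
  have := ((hasDerivAt_log hx.ne').const_mul α).add
    (((hasDerivAt_const x (log (1 + α))).sub (hlin.log (by positivity))).const_mul (α + 1))
  exact this.congr_deriv (by field_simp; ring)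

lemma hasDerivAt_logHfun_left {α x : ℝ} (hα : 0 < α) (hx : 0 < x) :
    HasDerivAt (fun a => logHfun a x)
      (log x + (log (1 + α) - log (1 + α * x)) + (1 - x) / (1 + α * x)) α := by
  have hshift : HasDerivAt (fun a => 1 + a) 1 α := (hasDerivAt_id α).const_add 1
  have hlin : HasDerivAt (fun a => 1 + a * x) x α := by
    simpa using ((hasDerivAt_id α).mul_const x).const_add 1
  have := ((hasDerivAt_id α).mul_const (log x)).add (((hasDerivAt_id α).add_const 1).mul
    ((hshift.log (by positivity)).sub (hlin.log (by positivity))))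
  exact this.congr_deriv (by simp only [Pi.sub_apply, id]; field_simp; ring)

lemma logHfun_strictMonoOn {α : ℝ} (hα : 0 < α) : StrictMonoOn (logHfun α) (Ioc 0 1) := by
  apply strictMonoOn_of_deriv_pos (convex_Ioc 0 1)
  · exact fun x hx => (hasDerivAt_logHfun_right hα hx.1).continuousAt.continuousWithinAt
  · intro x hx
    rw [interior_Ioc] at hx
    rw [(hasDerivAt_logHfun_right hα hx.1).deriv]
    have : 0 < 1 - x := by linarith [hx.2]
    have := hx.1
    positivity

lemma hfun_strictMonoOn {α : ℝ} (hα : 0 < α) : StrictMonoOn (hfun α) (Icc 0 1) := by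
  rintro x ⟨hx0, -⟩ y ⟨-, hy1⟩ hxy
  have hy : 0 < y := hx0.trans_lt hxy
  rw [hfun_eq_exp_logHfun hα hy]
  rcases hx0.eq_or_lt with rfl | hx
  · rw [hfun_zero_right hα.ne']
    exact exp_pos _
  · rw [hfun_eq_exp_logHfun hα hx]
    exact exp_lt_exp.mpr (logHfun_strictMonoOn hα ⟨hx, hxy.le.trans hy1⟩ ⟨hy, hy1⟩ hxy)

lemma logHfun_left_deriv_nonpos {α x : ℝ} (hα : 0 < α) (hα1 : α ≤ 1) (hx : 0 < x)
    (hx1 : x ≤ 1) :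
    log x + (log (1 + α) - log (1 + α * x)) + (1 - x) / (1 + α * x) ≤ 0 := by
  have hlog_quot : log (1 + α) - log (1 + α * x) ≤ α * (1 - x) / (1 + α * x) := by
    rw [← log_div (by positivity) (by positivity)]
    calc _ ≤ (1 + α) / (1 + α * x) - 1 := log_le_sub_one_of_pos (by positivity)
      _ = _ := by field_simp; ring
  have hcoef : (α + 1) * (1 - x) / (1 + α * x) ≤ 2 * (1 - x) / (1 + x) := by
    rw [div_le_div_iff₀ (by positivity) (by positivity)]
    nlinarith [mul_nonneg (sub_nonneg.mpr hα1) (sq_nonneg (1 - x))]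
  have hpade := log_le_two_mul_sub_one_div_add_one hx hx1
  have hsum : α * (1 - x) / (1 + α * x) + (1 - x) / (1 + α * x)
      = (α + 1) * (1 - x) / (1 + α * x) := by
    ring
  have hpade_neg : 2 * (x - 1) / (x + 1) = -(2 * (1 - x) / (1 + x)) := by ring
  linarith

lemma logHfun_antitoneOn_left {x : ℝ} (hx : 0 < x) (hx1 : x ≤ 1) :
    AntitoneOn (fun a => logHfun a x) (Ioc 0 1) := by
  apply antitoneOn_of_deriv_nonpos (convex_Ioc 0 1)
  · exact fun a ha => (hasDerivAt_logHfun_left ha.1 hx).continuousAt.continuousWithinAt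
  · intro a ha
    rw [interior_Ioc] at ha
    exact (hasDerivAt_logHfun_left ha.1 hx).differentiableAt.differentiableWithinAt
  · intro a ha
    rw [interior_Ioc] at ha
    rw [(hasDerivAt_logHfun_left ha.1 hx).deriv]
    exact logHfun_left_deriv_nonpos ha.1 ha.2.le hx hx1

lemma hfun_antitoneOn_left {x : ℝ} (hx0 : 0 ≤ x) (hx1 : x ≤ 1) :
    AntitoneOn (fun a => hfun a x) (Ioc 0 1) := by
  intro a ha b hb hab
  rcases hx0.eq_or_lt with rfl | hx
  · simp only [hfun_zero_right ha.1.ne', hfun_zero_right hb.1.ne', le_refl]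
  · simp only [hfun_eq_exp_logHfun ha.1 hx, hfun_eq_exp_logHfun hb.1 hx, exp_le_exp]
    exact logHfun_antitoneOn_left hx hx1 ha hb hab

theorem stmt14 :
    (∀ x ∈ Set.Icc (0 : ℝ) 1, ∀ α β : ℝ, 0 < α → α ≤ β → β ≤ 1 → hfun β x ≤ hfun α x) ∧
    (∀ α : ℝ, 0 < α → α ≤ 1 →
      ∀ x y : ℝ, 0 ≤ x → x ≤ y → y ≤ 1 → hfun α x ≤ hfun α y) ∧
    (∀ α x : ℝ, 0 < α → α ≤ 1 → 0 ≤ x → x < 1 → hfun α x < 1) := by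
  refine ⟨?_, ?_, ?_⟩
  · rintro x ⟨hx0, hx1⟩ α β hα hαβ hβ1
    exact hfun_antitoneOn_left hx0 hx1 ⟨hα, hαβ.trans hβ1⟩ ⟨hα.trans_le hαβ, hβ1⟩ hαβ
  · intro α hα _ x y hx hxy hy
    exact (hfun_strictMonoOn hα).monotoneOn ⟨hx, hxy.trans hy⟩ ⟨hx.trans hxy, hy⟩ hxy
  · intro α x hα _ hx hx1
    calc hfun α x < hfun α 1 := hfun_strictMonoOn hα ⟨hx, hx1.le⟩ ⟨zero_le_one, le_rfl⟩ hx1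
      _ = 1 := hfun_one_right hα
end

section
/- Let (Ω, F, P) be a probability space, n ∈ ℕ, and X_1,...,X_n integrable real random variables. Let (F_i)_{i=1}^n and (G_i)_{i=1}^n be increasing families of sub-σ-algebras of F with G_i ⊆ F_i for every i. Set X̃_i = E[X_i | F_i] and Ỹ_i = E[X_i | G_i], and define backward recursions V_F^{(n)} = X̃_n, V_F^{(i)} = max(X̃_i, E[V_F^{(i+1)} | F_i]) for i < n, and similarly V_G^{(n)} = Ỹ_n, V_G^{(i)} = max(Ỹ_i, E[V_G^{(i+1)} | G_i]) for i < n. Then V_G^{(i)} ≤ E[V_F^{(i)} | G_i] almost surely for every i ∈ {1,...,n}; in particular E[V_G^{(1)}] ≤ E[V_F^{(1)}]. -/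
/-!
Backward induction on `i`. Since `max` is convex, `max (E[a | G], E[b | G]) ≤ E[max (a, b) | G]`;
combined with the tower property for `G i ≤ F i` and `G i ≤ G (i + 1)`, this carries the
inequality `W (i + 1) ≤ E[V (i + 1) | G (i + 1)]` down to `W i ≤ E[V i | G i]`. Integrating at
`i = 0` gives the comparison of expectations.
-/

open MeasureTheory

theorem Fin.reverse_induction {n : ℕ} {p : Fin n → Prop}
    (last : ∀ h : 0 < n, p ⟨n - 1, Nat.sub_one_lt_of_lt h⟩)
    (step : ∀ (i : Fin n) (h : (i : ℕ) + 1 < n), p ⟨(i : ℕ) + 1, h⟩ → p i) (i : Fin n) :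
    p i := by
  obtain ⟨i, hi⟩ := i
  induction hk : n - i generalizing i with
  | zero => omega
  | succ k ih =>
    by_cases h : i + 1 < n
    · exact step ⟨i, hi⟩ h (ih (i + 1) h (by omega))
    · obtain rfl : i = n - 1 := by omega
      exact last (by omega)

namespace MeasureTheory

variable {Ω : Type*} {m m' m0 : MeasurableSpace Ω} {μ : Measure Ω} {f g : Ω → ℝ}

lemma max_condExp_ae_le_condExp_max (hf : Integrable f μ) (hg : Integrable g μ) :
    (fun ω => max (μ[f | m] ω) (μ[g | m] ω)) ≤ᵐ[μ]
      μ[fun ω => max (f ω) (g ω) | m] := by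
  have hfg : Integrable (fun ω => max (f ω) (g ω)) μ := hf.sup hg
  filter_upwards [condExp_mono (m := m) hf hfg (ae_of_all _ fun _ => le_max_left _ _),
    condExp_mono (m := m) hg hfg (ae_of_all _ fun _ => le_max_right _ _)] with ω hf hg
  exact max_le hf hg

lemma condExp_ae_le_condExp_of_ae_le_condExp (hmm' : m ≤ m') (hm' : m' ≤ m0)
    [SigmaFinite (μ.trim hm')] (hf : Integrable f μ) (hfg : f ≤ᵐ[μ] μ[g | m']) :
    μ[f | m] ≤ᵐ[μ] μ[g | m] :=
  (condExp_mono hf integrable_condExp hfg).trans_eq (condExp_condExp_of_le hmm' hm')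

lemma max_condExp_ae_le_condExp_max_condExp {Y U U' : Ω → ℝ} (hmm' : m ≤ m')
    (hm' : m' ≤ m0) [SigmaFinite (μ.trim hm')] (hU : μ[U | m] ≤ᵐ[μ] μ[U' | m]) :
    (fun ω => max (μ[Y | m] ω) (μ[U | m] ω)) ≤ᵐ[μ]
      μ[fun ω => max (μ[Y | m'] ω) (μ[U' | m'] ω) | m] := by
  filter_upwards [hU, condExp_condExp_of_le (f := Y) hmm' hm',
    condExp_condExp_of_le (f := U') hmm' hm',
    max_condExp_ae_le_condExp_max (m := m) (integrable_condExp (f := Y) (m := m'))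
      (integrable_condExp (f := U') (m := m'))] with ω hU hY hU' hmax
  calc max (μ[Y | m] ω) (μ[U | m] ω)
      ≤ max (μ[Y | m] ω) (μ[U' | m] ω) := max_le_max_left _ hU
    _ = max (μ[μ[Y | m'] | m] ω) (μ[μ[U' | m'] | m] ω) := by rw [hY, hU']
    _ ≤ _ := hmax

end MeasureTheory

theorem stmt16 {Ω : Type*} [m0 : MeasurableSpace Ω] (P : Measure Ω)
    [IsProbabilityMeasure P] (n : ℕ) (hn : 0 < n)
    (X : Fin n → Ω → ℝ)
    (F G : Fin n → MeasurableSpace Ω)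
    (hG : Monotone G)
    (hFle : ∀ i, F i ≤ m0) (hGF : ∀ i, G i ≤ F i)
    (V W : Fin n → Ω → ℝ)
    (hVn : V ⟨n - 1, by omega⟩ =ᵐ[P] P[X ⟨n - 1, by omega⟩ | F ⟨n - 1, by omega⟩])
    (hVi : ∀ (i : Fin n) (h : (i : ℕ) + 1 < n),
      V i =ᵐ[P] fun ω => max ((P[X i | F i]) ω) ((P[V ⟨(i : ℕ) + 1, h⟩ | F i]) ω))
    (hWn : W ⟨n - 1, by omega⟩ =ᵐ[P] P[X ⟨n - 1, by omega⟩ | G ⟨n - 1, by omega⟩])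
    (hWi : ∀ (i : Fin n) (h : (i : ℕ) + 1 < n),
      W i =ᵐ[P] fun ω => max ((P[X i | G i]) ω) ((P[W ⟨(i : ℕ) + 1, h⟩ | G i]) ω)) :
    (∀ i : Fin n, W i ≤ᵐ[P] P[V i | G i]) ∧
    ∫ ω, W ⟨0, hn⟩ ω ∂P ≤ ∫ ω, V ⟨0, hn⟩ ω ∂P := by
  have hGle : ∀ i, G i ≤ m0 := fun i => (hGF i).trans (hFle i)
  have hWint : ∀ i, Integrable (W i) P := Fin.reverse_induction
    (fun _ => integrable_condExp.congr hWn.symm)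
    (fun i h _ => (integrable_condExp.sup integrable_condExp).congr (hWi i h).symm)
  have hWV : ∀ i, W i ≤ᵐ[P] P[V i | G i] := by
    refine Fin.reverse_induction (fun _ => ?_) (fun i h ih => ?_)
    · calc W _ =ᵐ[P] P[X _ | G _] := hWn
        _ =ᵐ[P] P[P[X _ | F _] | G _] := (condExp_condExp_of_le (hGF _) (hFle _)).symm
        _ ≤ᵐ[P] P[V _ | G _] := (condExp_congr_ae hVn.symm).le
    · have hnext : P[W ⟨i + 1, h⟩ | G i] ≤ᵐ[P] P[V ⟨i + 1, h⟩ | G i] :=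
        condExp_ae_le_condExp_of_ae_le_condExp (hG (Fin.le_iff_val_le_val.2 (Nat.le_succ _)))
          (hGle _) (hWint _) ih
      exact (hWi i h).trans_le
        ((max_condExp_ae_le_condExp_max_condExp (hGF i) (hFle i) hnext).trans_eq
          (condExp_congr_ae (hVi i h).symm))
  refine ⟨hWV, ?_⟩
  calc ∫ ω, W ⟨0, hn⟩ ω ∂P ≤ ∫ ω, (P[V ⟨0, hn⟩ | G ⟨0, hn⟩]) ω ∂P :=
        integral_mono_ae (hWint _) integrable_condExp (hWV _)
    _ = ∫ ω, V ⟨0, hn⟩ ω ∂P := integral_condExp (hGle _)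
end

section
/- Let X_1,...,X_l be i.i.d. exponential random variables with rate 1, and let a ∈ ℝ_{≥0}^l with a* = max_{i} a_i > 0. Set ā = (1/l)·Σ_{i=1}^l a_i and α = ā/a*. Then for every 0 ≤ ε ≤ ā, P[ Σ_{i=1}^{l} (ε − a_i)·X_i ≥ 0 ] ≤ (h_α(ε/ā))^l, where h_α(x) = x^α·((1/α + 1)/(1/α + x))^{α+1}. (Equivalently, since Y = X/(X_1+⋯+X_l) is uniformly distributed on the probability simplex, P[⟨a, Y⟩ ≤ ε] ≤ (h_α(ε/ā))^l.) -/
open scoped BigOperators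
open MeasureTheory ProbabilityTheory

/-!
Chernoff bound. For `t ≥ 0` with `t (ε - aᵢ) < 1`, Markov's inequality for `exp (t ∑ (ε - aᵢ) Xᵢ)`
and the moment generating function `(1 - s)⁻¹` of `Exp(1)` bound the probability by
`∏ (1 - t (ε - aᵢ))⁻¹`. Each factor `1 + t (aᵢ - ε)` is affine in `aᵢ ∈ [0, a*]`, so by weighted
AM-GM it is at least `p ^ (1 - aᵢ/a*) * q ^ (aᵢ/a*)`, its values `p`, `q` at `aᵢ = 0`, `aᵢ = a*`.
For `t = (ā - ε) / (ε (a* - ε))` this gives the bound `(A ^ (1 - α) * (ε/ā) ^ α) ^ l` with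
`A = (a* - ε) / (a* - ā)`, and a second weighted AM-GM, with weights `(1 ∓ α)/2`, shows
`A ^ (1 - α) ≤ ((a* + ā) / (a* + ε)) ^ (1 + α)`, which is exactly the second factor of `h_α(ε/ā)`.
When `ε = 0` or `ā = a*` all coefficients `ε - aᵢ` are `≤ 0` and one is `< 0`, so the event is null
because exponential variables are almost surely positive.
-/

open Real Finset

section

variable {Ω : Type*} [MeasurableSpace Ω] {P : Measure Ω}

theorem map_eq_expMeasure_one_of_cdf [IsProbabilityMeasure P] {Z : Ω → ℝ}
    (hZ : Measurable Z)
    (hcdf : ∀ t, (P {ω | Z ω ≤ t}).toReal = if 0 ≤ t then 1 - exp (-t) else 0) :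
    P.map Z = expMeasure 1 := by
  have := isProbabilityMeasure_expMeasure one_pos
  have := Measure.isProbabilityMeasure_map (μ := P) hZ.aemeasurable
  refine Measure.eq_of_cdf _ _ ?_
  ext t
  rw [cdf_eq_real, map_measureReal_apply hZ measurableSet_Iic, cdf_expMeasure_eq one_pos, one_mul]
  exact hcdf t

theorem integral_exp_mul_expMeasure_one {s : ℝ} (hs : s < 1) :
    ∫ x, exp (s * x) ∂expMeasure 1 = (1 - s)⁻¹ := by
  have hdens : ∀ x, (exponentialPDF 1 x).toReal • exp (s * x) =
      (Set.Ici (0 : ℝ)).indicator (fun x => exp ((s - 1) * x)) x := by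
    intro x
    rw [exponentialPDF_eq, ENNReal.toReal_ofReal (by positivity), smul_eq_mul]
    simp only [Set.indicator_apply, Set.mem_Ici]
    split_ifs
    · rw [one_mul, ← exp_add]; ring_nf
    · exact zero_mul _
  rw [show expMeasure 1 = volume.withDensity (exponentialPDF 1) from rfl,
    integral_withDensity_eq_integral_toReal_smul (f := exponentialPDF 1)
      (measurable_exponentialPDFReal 1).ennreal_ofReal
      (ae_of_all _ fun _ => ENNReal.ofReal_lt_top)]
  simp_rw [hdens]
  rw [integral_indicator measurableSet_Ici, integral_Ici_eq_integral_Ioi,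
    integral_exp_mul_Ioi (sub_neg.2 hs), mul_zero, exp_zero, neg_div, ← div_neg, neg_sub, one_div]

theorem mgf_of_map_eq_expMeasure_one {Z : Ω → ℝ} (hZ : Measurable Z)
    (hmap : P.map Z = expMeasure 1) {s : ℝ} (hs : s < 1) :
    mgf Z P s = (1 - s)⁻¹ := by
  rw [mgf, ← integral_exp_mul_expMeasure_one hs, ← hmap,
    integral_map hZ.aemeasurable (by fun_prop)]

theorem integrable_exp_mul_of_map_eq_expMeasure_one {Z : Ω → ℝ} (hZ : Measurable Z)
    (hmap : P.map Z = expMeasure 1) {s : ℝ} (hs : s < 1) :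
    Integrable (fun ω => exp (s * Z ω)) P :=
  Integrable.of_integral_ne_zero <| by
    rw [← mgf, mgf_of_map_eq_expMeasure_one hZ hmap hs]
    exact inv_ne_zero (sub_ne_zero.2 hs.ne')

theorem measure_nonpos_eq_zero_of_map_eq_expMeasure_one {Z : Ω → ℝ}
    (hZ : Measurable Z) (hmap : P.map Z = expMeasure 1) :
    P {ω | Z ω ≤ 0} = 0 := by
  have := isProbabilityMeasure_expMeasure one_pos
  change P (Z ⁻¹' Set.Iic 0) = 0
  rw [← Measure.map_apply hZ measurableSet_Iic, hmap, ← ofReal_cdf,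
    cdf_expMeasure_eq one_pos]
  simp

variable {ι : Type*} {X : ι → Ω → ℝ} {s : Finset ι}

theorem measure_sum_mul_nonneg_eq_zero {a : ι → ℝ} {ε : ℝ}
    (hX : ∀ i ∈ s, P {ω | X i ω ≤ 0} = 0) (hle : ∀ i ∈ s, ε ≤ a i) (hlt : ∃ j ∈ s, ε < a j) :
    P {ω | 0 ≤ ∑ i ∈ s, (ε - a i) * X i ω} = 0 := by
  refine measure_mono_null (fun ω hω => ?_) ((measure_biUnion_null_iff s.countable_toSet).2 hX)
  by_contra hω'
  simp only [Set.mem_iUnion, Set.mem_ofPred_eq, not_exists, not_le] at hω'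
  obtain ⟨j, hj, hεj⟩ := hlt
  exact (sum_neg'
    (fun i hi => mul_nonpos_of_nonpos_of_nonneg (by linarith [hle i hi]) (hω' i hi).le)
    ⟨j, hj, mul_neg_of_neg_of_pos (by linarith) (hω' j hj)⟩).not_ge hω

theorem measureReal_sum_mul_nonneg_le_prod (hmeas : ∀ i, Measurable (X i))
    (hindep : iIndepFun X P) (hexp : ∀ i, P.map (X i) = expMeasure 1) {c : ι → ℝ} {t : ℝ}
    (ht : 0 ≤ t) (htc : ∀ i ∈ s, t * c i < 1) :
    P.real {ω | 0 ≤ ∑ i ∈ s, c i * X i ω} ≤ ∏ i ∈ s, (1 - t * c i)⁻¹ := by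
  have := hindep.isProbabilityMeasure
  set Y : ι → Ω → ℝ := fun i ω => c i * X i ω
  have hYmeas : ∀ i, Measurable (Y i) := fun i => (hmeas i).const_mul _
  have hYindep : iIndepFun Y P := hindep.comp _ fun i => measurable_const_mul (c i)
  have hmgfY : ∀ i, mgf (Y i) P t = mgf (X i) P (t * c i) := fun i => by
    simp only [Y, mgf, mul_assoc]
  have hint : Integrable (fun ω => exp (t * (∑ i ∈ s, Y i) ω)) P :=
    hYindep.integrable_exp_mul_sum hYmeas fun i hi => by
      simpa only [Y, mul_assoc] using
        integrable_exp_mul_of_map_eq_expMeasure_one (hmeas i) (hexp i) (htc i hi)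
  calc P.real {ω | 0 ≤ ∑ i ∈ s, c i * X i ω}
      = P.real {ω | 0 ≤ (∑ i ∈ s, Y i) ω} := by simp only [Finset.sum_apply, Y]
    _ ≤ exp (-t * 0) * mgf (∑ i ∈ s, Y i) P t := measure_ge_le_exp_mul_mgf 0 ht hint
    _ = ∏ i ∈ s, (1 - t * c i)⁻¹ := by
      rw [mul_zero, exp_zero, one_mul, hYindep.mgf_sum hYmeas]
      exact Finset.prod_congr rfl fun i hi => by
        rw [hmgfY, mgf_of_map_eq_expMeasure_one (hmeas i) (hexp i) (htc i hi)]

end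

theorem rpow_mul_rpow_pow_card_le_prod {ι : Type*} {s : Finset ι} {θ : ι → ℝ} {p q : ℝ}
    (hp : 0 ≤ p) (hq : 0 ≤ q) (hθ0 : ∀ i ∈ s, 0 ≤ θ i) (hθ1 : ∀ i ∈ s, θ i ≤ 1) :
    (p ^ (1 - (∑ i ∈ s, θ i) / #s) * q ^ ((∑ i ∈ s, θ i) / #s)) ^ #s ≤
      ∏ i ∈ s, ((1 - θ i) * p + θ i * q) := by
  rcases s.eq_empty_or_nonempty with rfl | hs
  · simp
  have hn : (#s : ℝ) ≠ 0 := Nat.cast_ne_zero.2 hs.card_pos.ne'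
  have hsum1 : (1 - (∑ i ∈ s, θ i) / #s) * #s = ∑ i ∈ s, (1 - θ i) := by
    rw [sum_sub_distrib, sum_const, nsmul_one]; field_simp
  rw [mul_pow, ← rpow_natCast, ← rpow_natCast (q ^ _), ← rpow_mul hp, ← rpow_mul hq, hsum1,
    div_mul_cancel₀ _ hn, rpow_sum_of_nonneg hp fun i hi => sub_nonneg.2 (hθ1 i hi),
    rpow_sum_of_nonneg hq hθ0, ← prod_mul_distrib]
  exact prod_le_prod (fun i _ => by positivity) fun i hi =>
    geom_mean_le_arith_mean2_weighted (sub_nonneg.2 (hθ1 i hi)) (hθ0 i hi) hp hq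
      (sub_add_cancel _ _)

theorem div_rpow_one_sub_div_le {M b e : ℝ} (he : -M < e) (heM : e ≤ M) (hb : -M < b)
    (hbM : b < M) :
    ((M - e) / (M - b)) ^ (1 - b / M) ≤ ((M + b) / (M + e)) ^ (1 + b / M) := by
  have hM : 0 < M := by linarith
  set x := (M - e) / (M - b)
  set y := (M + e) / (M + b)
  have hx : 0 ≤ x := div_nonneg (by linarith) (by linarith)
  have hy : 0 < y := div_pos (by linarith) (by linarith)
  have hw1 : 0 ≤ (1 - b / M) / 2 := by
    have := (div_lt_one hM).2 hbM; linarith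
  have hw2 : 0 ≤ (1 + b / M) / 2 := by
    have := (lt_div_iff₀ hM).2 (by linarith : -1 * M < b); linarith
  -- weighted AM-GM with weights (1 ∓ b/M)/2, whose arithmetic mean is exactly 1
  have hamgm : x ^ ((1 - b / M) / 2) * y ^ ((1 + b / M) / 2) ≤ 1 := by
    refine (geom_mean_le_arith_mean2_weighted hw1 hw2 hx hy.le (by ring)).trans_eq ?_
    have : M - b ≠ 0 := by linarith
    have : M + b ≠ 0 := by linarith
    simp only [x, y]
    field_simp
    ring
  have hsq : x ^ (1 - b / M) * y ^ (1 + b / M) ≤ 1 := by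
    have := pow_le_one₀ (by positivity) hamgm (n := 2)
    rwa [mul_pow, ← rpow_natCast, ← rpow_natCast (y ^ _), ← rpow_mul hx, ← rpow_mul hy.le,
      Nat.cast_ofNat, div_mul_cancel₀ _ two_ne_zero, div_mul_cancel₀ _ two_ne_zero] at this
  rw [show (M + b) / (M + e) = y⁻¹ from (inv_div _ _).symm, inv_rpow hy.le, ← one_div,
    le_div_iff₀ (rpow_pos_of_pos hy _)]
  exact hsq

theorem hfun_nonneg {α x : ℝ} (hα : 0 ≤ α) (hx : 0 ≤ x) : 0 ≤ hfun α x :=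
  mul_nonneg (rpow_nonneg hx _) (rpow_nonneg (by positivity) _)

theorem hfun_one {α : ℝ} (hα : 0 ≤ α) : hfun α 1 = 1 := by
  rw [hfun, one_rpow, div_self (by positivity), one_rpow, one_mul]

theorem hfun_div_div {M b e : ℝ} (hb : b ≠ 0) :
    hfun (b / M) (e / b) = (e / b) ^ (b / M) * ((M + b) / (M + e)) ^ (b / M + 1) := by
  rw [hfun, one_div_div, ← add_div, div_add_one hb, div_div_div_cancel_right₀ hb]

section

variable {ι Ω : Type*} [MeasurableSpace Ω] {P : Measure Ω} {X : ι → Ω → ℝ} {s : Finset ι}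

theorem measureReal_sum_mul_nonneg_le_hfun_pow_of_lt (hmeas : ∀ i, Measurable (X i))
    (hindep : iIndepFun X P) (hexp : ∀ i, P.map (X i) = expMeasure 1) {a : ι → ℝ} {M ε : ℝ}
    (ha0 : ∀ i ∈ s, 0 ≤ a i) (haM : ∀ i ∈ s, a i ≤ M) (hε : 0 < ε)
    (hεa : ε < (∑ i ∈ s, a i) / #s) (hmean : (∑ i ∈ s, a i) / #s < M) :
    P.real {ω | 0 ≤ ∑ i ∈ s, (ε - a i) * X i ω} ≤
      hfun ((∑ i ∈ s, a i) / #s / M) (ε / ((∑ i ∈ s, a i) / #s)) ^ #s := by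
  set ā := (∑ i ∈ s, a i) / #s
  have hM : 0 < M := by linarith
  set α := ā / M
  set θ : ι → ℝ := fun i => a i / M
  set t := (ā - ε) / (ε * (M - ε))
  set p := (M - ā) / (M - ε)
  set q := ā / ε
  have hp : 0 < p := div_pos (by linarith) (by linarith)
  have hq : 0 < q := div_pos (by linarith) hε
  have ht : 0 < t := div_pos (by linarith) (mul_pos hε (by linarith))
  have hθ : (∑ i ∈ s, θ i) / #s = α := by
    rw [← sum_div, div_right_comm]
  have hchord : ∀ i, 1 - t * (ε - a i) = (1 - θ i) * p + θ i * q := by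
    intro i
    have : M - ε ≠ 0 := by linarith
    simp only [t, θ, p, q]
    field_simp
    ring
  have hfactor : ∀ i ∈ s, 0 < 1 - t * (ε - a i) := by
    intro i hi
    have h0 : 0 ≤ θ i := div_nonneg (ha0 i hi) hM.le
    have h1 : θ i ≤ 1 := (div_le_one hM).2 (haM i hi)
    rw [hchord]
    rcases h1.lt_or_eq with h1 | h1
    · exact add_pos_of_pos_of_nonneg (mul_pos (by linarith) hp) (mul_nonneg h0 hq.le)
    · simpa [h1] using hq
  calc P.real {ω | 0 ≤ ∑ i ∈ s, (ε - a i) * X i ω}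
      ≤ ∏ i ∈ s, (1 - t * (ε - a i))⁻¹ :=
        measureReal_sum_mul_nonneg_le_prod hmeas hindep hexp
          ht.le fun i hi => by linarith [hfactor i hi]
    _ = (∏ i ∈ s, ((1 - θ i) * p + θ i * q))⁻¹ := by simp only [prod_inv_distrib, hchord]
    _ ≤ ((p ^ (1 - α) * q ^ α) ^ #s)⁻¹ := by
        rw [← hθ]
        exact inv_anti₀ (by positivity) (rpow_mul_rpow_pow_card_le_prod hp.le hq.le
          (fun i hi => div_nonneg (ha0 i hi) hM.le) fun i hi => (div_le_one hM).2 (haM i hi))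
    _ = (((M - ε) / (M - ā)) ^ (1 - α) * (ε / ā) ^ α) ^ #s := by
        rw [← inv_pow, mul_inv, ← inv_rpow hp.le, ← inv_rpow hq.le, inv_div, inv_div]
    _ ≤ hfun α (ε / ā) ^ #s := by
        have hB : 0 ≤ ε / ā := div_nonneg hε.le (by linarith)
        rw [hfun_div_div (by linarith : ā ≠ 0), mul_comm]
        gcongr
        · exact mul_nonneg (rpow_nonneg hB _) (rpow_nonneg (by rw [← inv_div]; positivity) _)
        rw [add_comm _ 1]
        exact div_rpow_one_sub_div_le (by linarith) (by linarith) (by linarith) hmean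

theorem measureReal_sum_mul_nonneg_le_hfun_pow (hmeas : ∀ i, Measurable (X i))
    (hindep : iIndepFun X P) (hexp : ∀ i, P.map (X i) = expMeasure 1) {a : ι → ℝ} {M ε : ℝ}
    (ha0 : ∀ i ∈ s, 0 ≤ a i) (haM : ∀ i ∈ s, a i ≤ M) (hpos : ∃ j ∈ s, 0 < a j) (hε : 0 ≤ ε)
    (hεa : ε ≤ (∑ i ∈ s, a i) / #s) :
    P.real {ω | 0 ≤ ∑ i ∈ s, (ε - a i) * X i ω} ≤
      hfun ((∑ i ∈ s, a i) / #s / M) (ε / ((∑ i ∈ s, a i) / #s)) ^ #s := by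
  have := hindep.isProbabilityMeasure
  set ā := (∑ i ∈ s, a i) / #s
  obtain ⟨j, hj, haj⟩ := hpos
  have hā : 0 < ā := div_pos (sum_pos' ha0 ⟨j, hj, haj⟩) (Nat.cast_pos.2 (card_pos.2 ⟨j, hj⟩))
  have hsum : ∑ i ∈ s, a i = ∑ i ∈ s, ā := by
    rw [sum_const, nsmul_eq_mul, mul_div_cancel₀ _ (Nat.cast_ne_zero.2 (card_pos.2 ⟨j, hj⟩).ne')]
  have hāM : ā ≤ M := by
    rw [div_le_iff₀ (Nat.cast_pos.2 (card_pos.2 ⟨j, hj⟩)), mul_comm, ← nsmul_eq_mul]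
    exact sum_le_card_nsmul s a M haM
  have hRHS : 0 ≤ hfun (ā / M) (ε / ā) ^ #s :=
    pow_nonneg (hfun_nonneg (div_nonneg hā.le (haj.le.trans (haM j hj))) (div_nonneg hε hā.le)) _
  have hnull : (∀ i ∈ s, ε ≤ a i) → (∃ j ∈ s, ε < a j) →
      P.real {ω | 0 ≤ ∑ i ∈ s, (ε - a i) * X i ω} ≤ hfun (ā / M) (ε / ā) ^ #s :=
    fun hle hlt => by
      rw [measureReal_def, measure_sum_mul_nonneg_eq_zero (fun i _ =>
        measure_nonpos_eq_zero_of_map_eq_expMeasure_one (hmeas i) (hexp i)) hle hlt]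
      exact hRHS
  rcases hεa.eq_or_lt with rfl | hεa
  · rw [div_self hā.ne', hfun_one (div_nonneg hā.le (hā.le.trans hāM)), one_pow]
    exact measureReal_le_one
  rcases hε.eq_or_lt with rfl | hε
  · exact hnull ha0 ⟨j, hj, haj⟩
  rcases hāM.eq_or_lt with hāM | hāM
  · have hall : ∀ i ∈ s, a i = M := by
      simpa [hāM] using (sum_eq_sum_iff_of_le fun i hi => (haM i hi).trans_eq hāM.symm).1 hsum
    exact hnull (fun i hi => by linarith [hall i hi]) ⟨j, hj, by linarith [hall j hj]⟩
  · exact measureReal_sum_mul_nonneg_le_hfun_pow_of_lt hmeas hindep hexp ha0 haM hε hεa hāM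

end

theorem stmt19 {Ω : Type*} [MeasurableSpace Ω] (P : Measure Ω)
    [IsProbabilityMeasure P]
    (X : ℕ → Ω → ℝ) (hmeas : ∀ i, Measurable (X i))
    (hindep : iIndepFun X P)
    (hexp : ∀ i t, (P {ω | X i ω ≤ t}).toReal = if 0 ≤ t then 1 - Real.exp (-t) else 0)
    (l : ℕ) (hl : 1 ≤ l) (a : ℕ → ℝ) (ha : ∀ i, 1 ≤ i → i ≤ l → 0 ≤ a i)
    (hastar : 0 < (Finset.Icc 1 l).sup' (Finset.nonempty_Icc.mpr hl) a)
    (ε : ℝ) (hε0 : 0 ≤ ε) (hεa : ε ≤ (∑ i ∈ Finset.Icc 1 l, a i) / (l : ℝ)) :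
    (P {ω | 0 ≤ ∑ i ∈ Finset.Icc 1 l, (ε - a i) * X i ω}).toReal ≤
      (hfun (((∑ i ∈ Finset.Icc 1 l, a i) / (l : ℝ)) /
          ((Finset.Icc 1 l).sup' (Finset.nonempty_Icc.mpr hl) a))
        (ε / ((∑ i ∈ Finset.Icc 1 l, a i) / (l : ℝ)))) ^ l := by
  have hcard : #(Icc 1 l) = l := by simp
  obtain ⟨j, hj, hja⟩ := exists_mem_eq_sup' (nonempty_Icc.mpr hl) a
  have hle : ∀ i ∈ Icc 1 l, a i ≤ (Icc 1 l).sup' (nonempty_Icc.mpr hl) a :=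
    fun i hi => le_sup' a hi
  have := measureReal_sum_mul_nonneg_le_hfun_pow hmeas hindep
    (fun i => map_eq_expMeasure_one_of_cdf (hmeas i) (hexp i))
    (fun i hi => ha i (mem_Icc.1 hi).1 (mem_Icc.1 hi).2) hle ⟨j, hj, hja ▸ hastar⟩ hε0
    (by rwa [hcard])
  rwa [hcard] at this
end
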